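/- arXiv:1903.11492 — 4 statements merged into one kernel-verified Lean document; each statement's English description precedes it below -/
import Mathlib

section
/- With the non-simply laced Cartan data, block matrices, and the quantities q_{α,i}, e, f, U_j, Q_k(m,n), L_k(n) defined in the context, for all families m = (m_{α,i})_{(α,i)∈J_k} and n = (n_{α,i})_{(α,i)∈J_k} of nonnegative integers one has the identity in ℚ: Q_k(m,n) = (1/(2δ)) [ Σ_{j=1}^{k} ( (q°_{j−1} − q°_j)·Λ°(q°_{j−1} − q°_j) + 2 (q°_{j−1} − q°_j)·A (q•_{t_0(j−1)} − q•_{t_0 j}) ) + Σ_{j=1}^{t_0 k} (q•_{j−1} − q•_j)·Λ•(q•_{j−1} − q•_j) − L_k(n) − Σ_{j=1}^{k} U_j ]. -/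
open Finset

/-- The modified restricted vacancy numbers
`q_{α,i} = ℓ_α + Σ_{(β,j)∈J_k : t_α j > t_β i} (C_{αβ}/t_α)(t_α j − t_β i) m_{β,j}
− Σ_{j=i+1}^{t_α k} (j−i) n_{α,j}`. -/
def qmod (r : ℕ) (C : Fin r → Fin r → ℤ) (t : Fin r → ℕ) (k : ℕ) (ℓ : Fin r → ℕ)
    (m n : Fin r → ℕ → ℕ) (α : Fin r) (i : ℕ) : ℚ :=
  (ℓ α : ℚ)
    + (∑ β, ∑ j ∈ Icc 1 (t β * k),
        if t β * i < t α * j then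
          (C α β : ℚ) / (t α : ℚ) * (((t α * j : ℕ) : ℚ) - ((t β * i : ℕ) : ℚ)) * (m β j : ℚ)
        else 0)
    - ∑ j ∈ Icc (i + 1) (t α * k), ((j : ℚ) - (i : ℚ)) * (n α j : ℚ)

/-- The restricted quadratic form `Q_k(m,n)`. -/
def Qk (r : ℕ) (C : Fin r → Fin r → ℤ) (t : Fin r → ℕ) (k : ℕ)
    (m n : Fin r → ℕ → ℕ) : ℚ :=
  (1 / 2) * (∑ α, ∑ β, ∑ i ∈ Icc 1 (t α * k), ∑ j ∈ Icc 1 (t β * k),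
      (C α β : ℚ) / (t α : ℚ) * ((min (t α * j) (t β * i) : ℕ) : ℚ)
        * (m α i : ℚ) * (m β j : ℚ))
    - ∑ α, ∑ i ∈ Icc 1 (t α * k), ∑ j ∈ Icc 1 (t α * k),
        ((min i j : ℕ) : ℚ) * (m α i : ℚ) * (n α j : ℚ)

/-- `L_k(n) = Σ_{(α,i),(β,j)∈J_k} (Λ_{αβ}/t_α) min(t_α j, t_β i) n_{α,i} n_{β,j}`. -/
def Lk (r : ℕ) (t : Fin r → ℕ) (Λ : Fin r → Fin r → ℤ) (k : ℕ)
    (n : Fin r → ℕ → ℕ) : ℚ :=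
  ∑ α, ∑ β, ∑ i ∈ Icc 1 (t α * k), ∑ j ∈ Icc 1 (t β * k),
    (Λ α β : ℚ) / (t α : ℚ) * ((min (t α * j) (t β * i) : ℕ) : ℚ)
      * (n α i : ℚ) * (n β j : ℚ)

/-- The vector `e_{t_0(j−1)+i}` of equation (4.16), as a function of `(j,i)` and the
short-root index `β`. -/
def eVec (r : ℕ) (t0 : ℕ) (m : Fin r → ℕ → ℕ) (j i : ℕ) (β : Fin r) : ℚ :=
  (∑ s ∈ Icc 1 (i - 1), (s : ℚ) * (m β (t0 * (j - 1) + s) : ℚ))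
    + ∑ s ∈ Icc i (t0 - 1), ((s : ℚ) - (t0 : ℚ)) * (m β (t0 * (j - 1) + s) : ℚ)

/-- The vector `f_{t_0(j−1)+i}` of equation (4.17). -/
def fVec (r : ℕ) (t0 : ℕ) (n : Fin r → ℕ → ℕ) (j i : ℕ) (β : Fin r) : ℚ :=
  ∑ s ∈ Icc i (t0 - 1), (n β (t0 * (j - 1) + s) : ℚ)

/-- `U_j = (1/t_0) Σ_{i=1}^{t_0} e_{t_0(j−1)+i} · Dᵗ(Λ° D e_{t_0(j−1)+i}
− 2 t_0 A f_{t_0(j−1)+i})`, with the dot products over the short/long blocks written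
out as explicit sums. -/
def Uj (r : ℕ) (C : Fin r → Fin r → ℤ) (t : Fin r → ℕ) (t0 : ℕ)
    (Λ : Fin r → Fin r → ℤ) (m n : Fin r → ℕ → ℕ) (j : ℕ) : ℚ :=
  (1 / (t0 : ℚ)) * ∑ i ∈ Icc 1 t0, ∑ β ∈ univ.filter (fun β => t β = t0),
    eVec r t0 m j i β *
      ∑ a ∈ univ.filter (fun a => t a = 1),
        (C a β : ℚ) *
          ((∑ a' ∈ univ.filter (fun a' => t a' = 1),
              (Λ a a' : ℚ) * ∑ b' ∈ univ.filter (fun b' => t b' = t0),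
                (C a' b' : ℚ) * eVec r t0 m j i b')
            - 2 * (t0 : ℚ) * ∑ b' ∈ univ.filter (fun b' => t b' = t0),
                (Λ a b' : ℚ) * fVec r t0 n j i b')


lemma sum_ite_ge (K a : ℕ) (g : ℕ → ℚ) (ha : 1 ≤ a) :
    ∑ i ∈ Icc 1 K, (if a ≤ i then g i else 0) = ∑ i ∈ Icc a K, g i := by
  rw [← Finset.sum_subset (s₁ := Icc a K) (h := fun x hx => by
    simp only [mem_Icc] at hx ⊢; omega)]
  · exact Finset.sum_congr rfl fun x hx => by simp only [mem_Icc] at hx; rw [if_pos hx.1]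
  · intro x hx hx'; simp only [mem_Icc] at hx hx'; rw [if_neg (by omega)]

lemma sum_ite_le (K M : ℕ) (hM : M ≤ K) (g : ℕ → ℚ) :
    ∑ u ∈ Icc 1 K, (if u ≤ M then g u else 0) = ∑ u ∈ Icc 1 M, g u := by
  rw [← Finset.sum_subset (s₁ := Icc 1 M) (h := fun x hx => by
    simp only [mem_Icc] at hx ⊢; omega)]
  · exact Finset.sum_congr rfl fun x hx => by simp only [mem_Icc] at hx; rw [if_pos hx.2]
  · intro x hx hx'; simp only [mem_Icc] at hx hx'; rw [if_neg (by omega)]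

lemma count_min (K A B : ℕ) (hA : A ≤ K) (hB : B ≤ K) :
    ∑ u ∈ Icc 1 K, (if u ≤ A then (1:ℚ) else 0) * (if u ≤ B then (1:ℚ) else 0)
      = ((min A B : ℕ) : ℚ) := by
  have : ∀ u, (if u ≤ A then (1:ℚ) else 0) * (if u ≤ B then (1:ℚ) else 0)
      = (if u ≤ min A B then (1:ℚ) else 0) := by
    intro u; split_ifs <;> simp_all <;> omega
  simp_rw [this]
  rw [sum_ite_le K (min A B) (le_trans (min_le_left _ _) hA)]
  simp [Nat.card_Icc]

lemma sum_blocks (T K : ℕ) (F : ℕ → ℚ) :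
    ∑ u ∈ Icc 1 (T*K), F u = ∑ j ∈ Icc 1 K, ∑ i ∈ Icc 1 T, F (T*(j-1)+i) := by
  induction K with
  | zero => simp
  | succ K ih =>
    rw [show T*(K+1) = T*K + T by ring]
    rw [show Icc 1 (T*K+T) = Icc 1 (T*K) ∪ Ioc (T*K) (T*K+T) by
      ext x; simp only [mem_union, mem_Icc, mem_Ioc]; omega]
    rw [Finset.sum_union (by
      rw [Finset.disjoint_left]; intro x hx hx'
      simp only [mem_Icc, mem_Ioc] at hx hx'; omega)]
    rw [ih]
    rw [show Icc 1 (K+1) = insert (K+1) (Icc 1 K) by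
      ext x; simp only [mem_insert, mem_Icc]; omega]
    rw [Finset.sum_insert (by simp)]
    have : ∑ i ∈ Icc 1 T, F (T*(K+1-1)+i) = ∑ u ∈ Ioc (T*K) (T*K+T), F u := by
      rw [show K+1-1 = K from rfl]
      apply Finset.sum_nbij' (fun i => T*K+i) (fun u => u - T*K)
      · intro i hi; simp only [mem_Icc, mem_Ioc] at *; omega
      · intro u hu; simp only [mem_Icc, mem_Ioc] at *; omega
      · intro i hi; simp only [mem_Icc] at hi; omega
      · intro u hu; simp only [mem_Ioc] at hu; omega
      · intro i hi; rfl
    rw [this]; ring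

lemma telescope (f : ℕ → ℚ) (N : ℕ) (T : ℕ) :
    ∑ i ∈ Icc 1 T, (f (N+i-1) - f (N+i)) = f N - f (N+T) := by
  induction T with
  | zero => simp
  | succ T ih =>
    rw [show Icc 1 (T+1) = insert (T+1) (Icc 1 T) by
      ext x; simp only [mem_insert, mem_Icc]; omega]
    rw [Finset.sum_insert (by simp), ih, show N+(T+1)-1 = N+T by omega]
    ring

lemma qdiff_n (N i : ℕ) (hi : 1 ≤ i) (g : ℕ → ℚ) :
    ((∑ j ∈ Icc i N, ((j:ℚ) - ((i-1:ℕ):ℚ)) * g j)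
      - ∑ j ∈ Icc (i+1) N, ((j:ℚ) - (i:ℚ)) * g j)
      = ∑ j ∈ Icc i N, g j := by
  have h1 : ∀ j ∈ Icc i N, ((j:ℚ) - ((i-1:ℕ):ℚ)) * g j = ((j:ℚ) - (i:ℚ)) * g j + g j := by
    intro j hj
    have : ((i-1:ℕ):ℚ) = (i:ℚ) - 1 := by
      have : (1:ℕ) ≤ i := hi
      push_cast [Nat.cast_sub this]; ring
    rw [this]; ring
  rw [Finset.sum_congr rfl h1, Finset.sum_add_distrib]
  have h2 : ∑ j ∈ Icc i N, ((j:ℚ) - (i:ℚ)) * g j = ∑ j ∈ Icc (i+1) N, ((j:ℚ) - (i:ℚ)) * g j := by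
    rcases le_or_gt i N with h | h
    · rw [show Icc i N = insert i (Icc (i+1) N) by
        ext x; simp only [mem_insert, mem_Icc]; omega]
      rw [Finset.sum_insert (by simp)]; simp
    · rw [Icc_eq_empty (by omega), Icc_eq_empty (by omega)]
  rw [h2]; ring

lemma lam_symm (r : ℕ) (C Λ : Fin r → Fin r → ℤ) (t : Fin r → ℕ) (δ : ℤ) (hδ : δ ≠ 0)
    (hsym : ∀ α β, (t β : ℤ) * C α β = (t α : ℤ) * C β α)
    (hCΛ : ∀ a b, ∑ ω, C a ω * Λ ω b = if a = b then δ else 0)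
    (hΛC : ∀ a b, ∑ ω, Λ a ω * C ω b = if a = b then δ else 0) :
    ∀ a b, (t b : ℤ) * Λ a b = (t a : ℤ) * Λ b a := by
  set X : Fin r → Fin r → ℤ := fun γ b => (t γ : ℤ) * Λ b γ - (t b : ℤ) * Λ γ b with hX
  have claim1 : ∀ ω b, ∑ γ, C ω γ * X γ b = 0 := by
    intro ω b
    have : ∀ γ, C ω γ * X γ b = (t ω : ℤ) * (Λ b γ * C γ ω) - (t b : ℤ) * (C ω γ * Λ γ b) := by
      intro γ
      simp only [hX]
      linear_combination Λ b γ * hsym ω γ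
    rw [Finset.sum_congr rfl (fun γ _ => this γ)]
    rw [Finset.sum_sub_distrib, ← Finset.mul_sum, ← Finset.mul_sum, hΛC, hCΛ]
    by_cases h : ω = b
    · subst h; simp
    · rw [if_neg (fun hh => h hh.symm), if_neg h]; ring
  have claim2 : ∀ a b, δ * X a b = 0 := by
    intro a b
    have h1 : ∑ γ, (∑ ω, Λ a ω * C ω γ) * X γ b = δ * X a b := by
      rw [Finset.sum_congr rfl (fun γ _ => by rw [hΛC])]
      simp [Finset.sum_ite_eq]
    have h2 : ∑ γ, (∑ ω, Λ a ω * C ω γ) * X γ b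
        = ∑ ω, Λ a ω * (∑ γ, C ω γ * X γ b) := by
      simp_rw [Finset.sum_mul, Finset.mul_sum]
      rw [Finset.sum_comm]
      congr 1; ext γ; congr 1; ext ω; ring
    rw [← h1, h2, Finset.sum_congr rfl (fun ω _ => by rw [claim1 ω b, mul_zero])]
    simp
  intro a b
  have := claim2 b a
  have hz : X b a = 0 := by
    rcases mul_eq_zero.mp this with h | h
    · exact absurd h hδ
    · exact h
  simp only [hX] at hz
  linarith

lemma CH_contract (r : ℕ) (C Λ : Fin r → Fin r → ℤ) (t : Fin r → ℕ) (t0 : ℕ) (δ : ℤ)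
    (htpos : ∀ α, 0 < t α)
    (hsym : ∀ α β, (t β : ℤ) * C α β = (t α : ℤ) * C β α)
    (hCΛ : ∀ a b, ∑ ω, C a ω * Λ ω b = if a = b then δ else 0) :
    ∀ α γ, ∑ β, ((C β α : ℚ) * (t α : ℚ) / (t β : ℚ)) * ((Λ β γ : ℚ) * (t γ : ℚ) / (t0 : ℚ))
      = if α = γ then (δ : ℚ) * (t α : ℚ) / (t0 : ℚ) else 0 := by
  intro α γ
  have key : ∀ β : Fin r, (C β α : ℚ) * (t α : ℚ) / (t β : ℚ) = (C α β : ℚ) := by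
    intro β
    have htβ : ((t β : ℚ)) ≠ 0 := Nat.cast_ne_zero.mpr (htpos β).ne'
    rw [div_eq_iff htβ]
    have h := hsym α β
    have : ((t β : ℚ)) * (C α β : ℚ) = ((t α : ℚ)) * (C β α : ℚ) := by exact_mod_cast h
    linarith
  have hcast : (∑ β, (C α β : ℚ) * (Λ β γ : ℚ)) = ((if α = γ then δ else 0 : ℤ) : ℚ) := by
    rw [← hCΛ α γ]; push_cast; rfl
  calc ∑ β, ((C β α : ℚ) * (t α : ℚ) / (t β : ℚ)) * ((Λ β γ : ℚ) * (t γ : ℚ) / (t0 : ℚ))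
      = (∑ β, (C α β : ℚ) * (Λ β γ : ℚ)) * ((t γ : ℚ) / (t0 : ℚ)) := by
        rw [Finset.sum_mul]
        exact Finset.sum_congr rfl (fun β _ => by rw [key β]; ring)
    _ = if α = γ then (δ : ℚ) * (t α : ℚ) / (t0 : ℚ) else 0 := by
        rw [hcast]
        by_cases h : α = γ
        · subst h; push_cast; rw [if_pos rfl, if_pos rfl]; ring
        · rw [if_neg h, if_neg h]; push_cast; ring

lemma HC_contract (r : ℕ) (C Λ : Fin r → Fin r → ℤ) (t : Fin r → ℕ) (t0 : ℕ) (δ : ℤ)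
    (htpos : ∀ α, 0 < t α)
    (hΛC : ∀ a b, ∑ ω, Λ a ω * C ω b = if a = b then δ else 0) :
    ∀ α γ, ∑ β, ((Λ α β : ℚ) * (t β : ℚ) / (t0 : ℚ)) * ((C β γ : ℚ) * (t γ : ℚ) / (t β : ℚ))
      = if α = γ then (δ : ℚ) * (t γ : ℚ) / (t0 : ℚ) else 0 := by
  intro α γ
  have hcast : (∑ β, (Λ α β : ℚ) * (C β γ : ℚ)) = ((if α = γ then δ else 0 : ℤ) : ℚ) := by
    rw [← hΛC α γ]; push_cast; rfl
  calc ∑ β, ((Λ α β : ℚ) * (t β : ℚ) / (t0 : ℚ)) * ((C β γ : ℚ) * (t γ : ℚ) / (t β : ℚ))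
      = (∑ β, (Λ α β : ℚ) * (C β γ : ℚ)) * ((t γ : ℚ) / (t0 : ℚ)) := by
        rw [Finset.sum_mul]
        refine Finset.sum_congr rfl (fun β _ => ?_)
        have htβ : ((t β : ℚ)) ≠ 0 := Nat.cast_ne_zero.mpr (htpos β).ne'
        have : ((Λ α β : ℚ) * (t β : ℚ) / (t0 : ℚ)) * ((C β γ : ℚ) * (t γ : ℚ) / (t β : ℚ))
            = (Λ α β : ℚ) * (C β γ : ℚ) * ((t γ : ℚ) / (t0 : ℚ)) * ((t β : ℚ) / (t β : ℚ)) := by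
          ring
        rw [this, div_self htβ, mul_one]
    _ = if α = γ then (δ : ℚ) * (t γ : ℚ) / (t0 : ℚ) else 0 := by
        rw [hcast]
        by_cases h : α = γ
        · subst h; push_cast; rw [if_pos rfl, if_pos rfl]; ring
        · rw [if_neg h, if_neg h]; push_cast; ring

def mfun (r t0 : ℕ) (t : Fin r → ℕ) (k : ℕ) (g : Fin r → ℕ → ℕ) (u : ℕ) (β : Fin r) : ℚ :=
  ∑ i ∈ Icc 1 (t β * k), if t β * u ≤ t0 * i then (g β i : ℚ) else 0

lemma ite_diff (c : ℚ) (p q u j : ℕ) (hp : p = 1 ∨ p = q) (hq : 0 < q) (hu : 1 ≤ u) (x : ℚ) :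
    ((if p*(u-1) < q*j then c/(q:ℚ) * (((q*j:ℕ):ℚ) - ((p*(u-1):ℕ):ℚ)) * x else 0)
      - if p*u < q*j then c/(q:ℚ) * (((q*j:ℕ):ℚ) - ((p*u:ℕ):ℚ)) * x else 0)
      = if p*u ≤ q*j then c*(p:ℚ)/(q:ℚ) * x else 0 := by
  obtain ⟨v, rfl⟩ : ∃ v, u = v + 1 := ⟨u-1, by omega⟩
  have hv : v + 1 - 1 = v := rfl
  rw [hv]
  have hp1 : 0 < p := by rcases hp with rfl | rfl; omega; omega
  rcases hp with rfl | rfl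
  · simp only [one_mul] at *
    split_ifs with h1 h2 h3 h3
    · push_cast; ring
    · omega
    · have h : q*j = v+1 := by omega
      rw [h]; push_cast; ring
    · omega
    · omega
    · omega
    · omega
    · ring
  · have e1 : p*(v+1) = p*v + p := by ring
    split_ifs with h1 h2 h3 h3
    · push_cast; ring
    · omega
    · have h : p*j = p*(v+1) := by omega
      rw [h]; push_cast; ring
    · exfalso
      have hj1 : v < j := by
        by_contra h
        push_neg at h
        have : p*j ≤ p*v := Nat.mul_le_mul_left p h
        omega
      have h2 : v + 1 ≤ j := hj1
      have : p*(v+1) ≤ p*j := Nat.mul_le_mul_left p h2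
      omega
    · omega
    · omega
    · omega
    · ring

lemma qdiff_long (r : ℕ) (C : Fin r → Fin r → ℤ) (t : Fin r → ℕ) (k t0 : ℕ) (ℓ : Fin r → ℕ)
    (m n : Fin r → ℕ → ℕ)
    (htval : ∀ β, t β = 1 ∨ t β = t0) (ht0 : 0 < t0)
    (α : Fin r) (hα : t α = t0) (u : ℕ) (hu : 1 ≤ u) :
    qmod r C t k ℓ m n α (u-1) - qmod r C t k ℓ m n α u
      = (∑ β, ((C α β : ℚ) * (t β : ℚ) / (t α : ℚ)) * mfun r t0 t k m u β)
        - mfun r t0 t k n u α := by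
  unfold qmod
  have hnpart : ((∑ j ∈ Icc ((u-1) + 1) (t α * k), ((j:ℚ) - ((u-1:ℕ):ℚ)) * (n α j : ℚ))
      - ∑ j ∈ Icc (u+1) (t α * k), ((j:ℚ) - ((u:ℕ):ℚ)) * (n α j : ℚ)) = mfun r t0 t k n u α := by
    rw [show (u-1)+1 = u by omega]
    rw [qdiff_n (t α * k) u hu]
    unfold mfun
    rw [eq_comm]
    have h : ∀ i ∈ Icc 1 (t α * k), (if t α * u ≤ t0 * i then ((n α i : ℕ):ℚ) else 0)
        = (if u ≤ i then ((n α i : ℕ):ℚ) else 0) := by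
      intro i _
      congr 1
      rw [hα]
      simp only [eq_iff_iff]
      constructor
      · intro h; exact Nat.le_of_mul_le_mul_left h ht0
      · intro h; exact Nat.mul_le_mul_left t0 h
    rw [Finset.sum_congr rfl h]
    exact sum_ite_ge (t α * k) u (fun i => (n α i : ℚ)) hu
  have hmpart : ((∑ β, ∑ j ∈ Icc 1 (t β * k),
        if t β * (u-1) < t α * j then
          (C α β : ℚ) / (t α : ℚ) * (((t α * j : ℕ) : ℚ) - ((t β * (u-1) : ℕ) : ℚ)) * (m β j : ℚ)
        else 0)
      - ∑ β, ∑ j ∈ Icc 1 (t β * k),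
        if t β * u < t α * j then
          (C α β : ℚ) / (t α : ℚ) * (((t α * j : ℕ) : ℚ) - ((t β * u : ℕ) : ℚ)) * (m β j : ℚ)
        else 0)
      = ∑ β, ((C α β : ℚ) * (t β : ℚ) / (t α : ℚ)) * mfun r t0 t k m u β := by
    rw [← Finset.sum_sub_distrib]
    refine Finset.sum_congr rfl (fun β _ => ?_)
    rw [← Finset.sum_sub_distrib]
    have hq : 0 < t α := by rw [hα]; exact ht0
    have hp : t β = 1 ∨ t β = t α := by rw [hα]; exact htval β
    rw [Finset.sum_congr rfl (fun j _ => ite_diff (C α β : ℚ) (t β) (t α) u j hp hq hu (m β j : ℚ))]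
    unfold mfun
    rw [Finset.mul_sum]
    refine Finset.sum_congr rfl (fun j _ => ?_)
    rw [hα]
    split_ifs with h
    · ring
    · ring
  linarith [hnpart, hmpart]


lemma sum_shift (N a b : ℕ) (g : ℕ → ℚ) :
    ∑ s ∈ Icc a b, g (N+s) = ∑ j' ∈ Icc (N+a) (N+b), g j' := by
  apply Finset.sum_nbij' (fun s => N+s) (fun j' => j'-N)
  · intro s hs; simp only [mem_Icc] at *; omega
  · intro u hu; simp only [mem_Icc] at *; omega
  · intro s hs; simp only [mem_Icc] at hs; omega
  · intro u hu; simp only [mem_Icc] at hu; omega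
  · intro s hs; rfl

lemma mfun_long (r t0 : ℕ) (t : Fin r → ℕ) (k : ℕ) (g : Fin r → ℕ → ℕ) (u : ℕ) (β : Fin r)
    (hβ : t β = t0) (ht0 : 0 < t0) (hu : 1 ≤ u) :
    mfun r t0 t k g u β = ∑ j' ∈ Icc u (t0*k), (g β j' : ℚ) := by
  unfold mfun
  rw [hβ]
  rw [Finset.sum_congr rfl (fun i _ => by
    rw [show (if t0 * u ≤ t0 * i then ((g β i : ℕ):ℚ) else 0)
        = (if u ≤ i then ((g β i : ℕ):ℚ) else 0) by
      congr 1
      simp only [eq_iff_iff]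
      exact ⟨fun h => Nat.le_of_mul_le_mul_left h ht0, fun h => Nat.mul_le_mul_left t0 h⟩])]
  exact sum_ite_ge (t0 * k) u (fun i => (g β i : ℚ)) hu

lemma mfun_short (r t0 : ℕ) (t : Fin r → ℕ) (k : ℕ) (g : Fin r → ℕ → ℕ) (u : ℕ) (γ : Fin r)
    (hγ : t γ = 1) (j : ℕ) (hj1 : 1 ≤ j) (h1 : t0*(j-1) < u) (h2 : u ≤ t0*j) :
    mfun r t0 t k g u γ = ∑ i' ∈ Icc j k, (g γ i' : ℚ) := by
  unfold mfun
  simp only [hγ, one_mul]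
  rw [Finset.sum_congr rfl (fun i' _ => by
    rw [show (if u ≤ t0 * i' then ((g γ i' : ℕ):ℚ) else 0)
        = (if j ≤ i' then ((g γ i' : ℕ):ℚ) else 0) by
      congr 1
      simp only [eq_iff_iff]
      constructor
      · intro h
        by_contra hc
        push_neg at hc
        have : i' ≤ j - 1 := by omega
        have : t0 * i' ≤ t0 * (j-1) := Nat.mul_le_mul_left t0 this
        omega
      · intro h
        have : t0 * j ≤ t0 * i' := Nat.mul_le_mul_left t0 h
        omega])]
  exact sum_ite_ge k j (fun i' => (g γ i' : ℚ)) hj1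

lemma ite_diff_sl (c : ℚ) (t0 N i j' : ℕ) (hi1 : 1 ≤ i) (hi2 : i ≤ t0) (x : ℚ) :
    ((if N < j' then c * ((j':ℚ) - (N:ℚ)) * x else 0)
      - if N + t0 < j' then c * ((j':ℚ) - ((N+t0:ℕ):ℚ)) * x else 0)
    = c*(t0:ℚ) * (if N+i ≤ j' then x else 0)
      + c * ((if N < j' ∧ j' < N+i then ((j':ℚ) - (N:ℚ))
          else if N+i ≤ j' ∧ j' + 1 ≤ N+t0 then ((j':ℚ) - (N:ℚ) - (t0:ℚ)) else 0) * x) := by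
  split_ifs
  all_goals try (exfalso; omega)
  all_goals try (push_cast; ring)
  all_goals have hj : j' = N + t0 := by omega
  all_goals subst hj
  all_goals push_cast
  all_goals ring

lemma eVec_as_sum (r t0 k : ℕ) (m : Fin r → ℕ → ℕ) (β : Fin r) (j i : ℕ)
    (hi1 : 1 ≤ i) (hi2 : i ≤ t0) (hj1 : 1 ≤ j) (hj2 : j ≤ k) :
    ∑ j' ∈ Icc 1 (t0*k), ((if t0*(j-1) < j' ∧ j' < t0*(j-1)+i then ((j':ℚ) - ((t0*(j-1):ℕ):ℚ))
        else if t0*(j-1)+i ≤ j' ∧ j' + 1 ≤ t0*(j-1) + t0 then ((j':ℚ) - ((t0*(j-1):ℕ):ℚ) - (t0:ℚ)) else 0)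
        * (m β j' : ℚ))
      = eVec r t0 m j i β := by
  have hN : t0*(j-1) + t0 = t0 * j := by
    have : j - 1 + 1 = j := by omega
    calc t0*(j-1) + t0 = t0 * ((j-1)+1) := by ring
    _ = t0 * j := by rw [this]
  have hNk : t0 * j ≤ t0 * k := Nat.mul_le_mul_left t0 hj2
  set N := t0*(j-1) with hNdef
  have hsub : Icc (N+1) (N+(t0-1)) ⊆ Icc 1 (t0*k) := by
    intro x hx; simp only [mem_Icc] at *; omega
  rw [← Finset.sum_subset hsub (fun x hx hx' => by
    simp only [mem_Icc] at hx hx'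
    have h1 : ¬(N < x ∧ x < N + i) := by omega
    have h2 : ¬(N + i ≤ x ∧ x + 1 ≤ N + t0) := by omega
    rw [if_neg h1, if_neg h2, zero_mul])]
  rw [← sum_shift N 1 (t0-1)]
  unfold eVec
  have hsplit : Icc 1 (t0-1) = Icc 1 (i-1) ∪ Icc i (t0-1) := by
    ext x; simp only [mem_union, mem_Icc]; omega
  rw [hsplit, Finset.sum_union (by
    rw [Finset.disjoint_left]; intro x hx hx'
    simp only [mem_Icc] at hx hx'; omega)]
  rw [← hNdef]
  congr 1
  · refine Finset.sum_congr rfl (fun s hs => ?_)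
    simp only [mem_Icc] at hs
    rw [if_pos (by omega)]
    push_cast
    ring_nf
  · refine Finset.sum_congr rfl (fun s hs => ?_)
    simp only [mem_Icc] at hs
    rw [if_neg (by omega), if_pos (by omega)]
    push_cast
    ring_nf

lemma qdiff_short (r : ℕ) (C : Fin r → Fin r → ℤ) (t : Fin r → ℕ) (k t0 : ℕ) (ℓ : Fin r → ℕ)
    (m n : Fin r → ℕ → ℕ)
    (htval : ∀ β, t β = 1 ∨ t β = t0) (ht0 : 1 < t0)
    (α : Fin r) (hα : t α = 1) (j i : ℕ) (hj1 : 1 ≤ j) (hj2 : j ≤ k) (hi1 : 1 ≤ i) (hi2 : i ≤ t0) :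
    qmod r C t k ℓ m n α (j-1) - qmod r C t k ℓ m n α j
      = (∑ β, ((C α β : ℚ) * (t β : ℚ) / (t α : ℚ)) * mfun r t0 t k m (t0*(j-1)+i) β)
        + (∑ β ∈ univ.filter (fun β => t β = t0), (C α β : ℚ) * eVec r t0 m j i β)
        - mfun r t0 t k n (t0*(j-1)+i) α := by
  have hu1 : 1 ≤ t0*(j-1)+i := by omega
  have hu2 : t0*(j-1) < t0*(j-1)+i := by omega
  have hN : t0*(j-1) + t0 = t0 * j := by
    have h : j - 1 + 1 = j := by omega
    calc t0*(j-1) + t0 = t0 * ((j-1)+1) := by ring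
    _ = t0 * j := by rw [h]
  have hu3 : t0*(j-1)+i ≤ t0*j := by omega
  have hmpart : ∀ β : Fin r, ((∑ j' ∈ Icc 1 (t β * k),
        if t β * (j-1) < t α * j' then
          (C α β : ℚ) / (t α : ℚ) * (((t α * j' : ℕ) : ℚ) - ((t β * (j-1) : ℕ) : ℚ)) * (m β j' : ℚ)
        else 0)
      - ∑ j' ∈ Icc 1 (t β * k),
        if t β * j < t α * j' then
          (C α β : ℚ) / (t α : ℚ) * (((t α * j' : ℕ) : ℚ) - ((t β * j : ℕ) : ℚ)) * (m β j' : ℚ)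
        else 0)
      = ((C α β : ℚ) * (t β : ℚ) / (t α : ℚ)) * mfun r t0 t k m (t0*(j-1)+i) β
        + (if t β = t0 then (C α β : ℚ) * eVec r t0 m j i β else 0) := by
    intro β
    rcases htval β with hβ | hβ
    · -- β short
      rw [← Finset.sum_sub_distrib]
      rw [Finset.sum_congr rfl (fun j' _ =>
        ite_diff (C α β : ℚ) (t β) (t α) j j' (Or.inl hβ) (by rw [hα]; omega) hj1 (m β j' : ℚ))]
      rw [mfun_short r t0 t k m (t0*(j-1)+i) β hβ j hj1 hu2 hu3]
      rw [if_neg (by rw [hβ]; omega)]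
      simp only [hβ, hα, one_mul, Nat.cast_one, mul_one, div_one, add_zero]
      rw [sum_ite_ge k j (fun j' => (C α β : ℚ) * (m β j' : ℚ)) hj1, ← Finset.mul_sum]
    · -- β long
      rw [← Finset.sum_sub_distrib]
      rw [hα, hβ]
      have hstep : ∀ j' : ℕ, ((if t0 * (j-1) < 1 * j' then
            (C α β : ℚ) / ((1:ℕ) : ℚ) * (((1 * j' : ℕ) : ℚ) - ((t0 * (j-1) : ℕ) : ℚ)) * (m β j' : ℚ)
          else 0)
          - if t0 * j < 1 * j' then
            (C α β : ℚ) / ((1:ℕ) : ℚ) * (((1 * j' : ℕ) : ℚ) - ((t0 * j : ℕ) : ℚ)) * (m β j' : ℚ)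
          else 0)
          = (C α β : ℚ)*(t0:ℚ) * (if t0*(j-1)+i ≤ j' then (m β j' : ℚ) else 0)
            + (C α β : ℚ) * ((if t0*(j-1) < j' ∧ j' < t0*(j-1)+i then ((j':ℚ) - ((t0*(j-1):ℕ):ℚ))
                else if t0*(j-1)+i ≤ j' ∧ j' + 1 ≤ t0*(j-1) + t0 then
                  ((j':ℚ) - ((t0*(j-1):ℕ):ℚ) - (t0:ℚ)) else 0) * (m β j' : ℚ)) := by
        intro j'
        have h := ite_diff_sl (C α β : ℚ) t0 (t0*(j-1)) i j' hi1 hi2 (m β j' : ℚ)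
        simp only [one_mul, Nat.cast_one, div_one]
        rw [← hN]
        exact h
      rw [Finset.sum_congr rfl (fun j' _ => hstep j')]
      rw [Finset.sum_add_distrib]
      rw [if_pos rfl]
      congr 1
      · rw [← Finset.mul_sum]
        rw [mfun_long r t0 t k m (t0*(j-1)+i) β hβ (by omega) hu1]
        rw [sum_ite_ge (t0*k) (t0*(j-1)+i) (fun j' => (m β j' : ℚ)) hu1]
        push_cast
        ring
      · rw [← Finset.mul_sum]
        rw [eVec_as_sum r t0 k m β j i hi1 hi2 hj1 hj2]
  unfold qmod
  have hnpart : ((∑ j' ∈ Icc ((j-1) + 1) (t α * k), ((j':ℚ) - ((j-1:ℕ):ℚ)) * (n α j' : ℚ))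
      - ∑ j' ∈ Icc (j+1) (t α * k), ((j':ℚ) - ((j:ℕ):ℚ)) * (n α j' : ℚ))
      = mfun r t0 t k n (t0*(j-1)+i) α := by
    rw [show (j-1)+1 = j by omega]
    rw [qdiff_n (t α * k) j hj1]
    rw [mfun_short r t0 t k n (t0*(j-1)+i) α hα j hj1 hu2 hu3]
    rw [hα, one_mul]
  have hm2 : ((∑ β, ∑ j' ∈ Icc 1 (t β * k),
        if t β * (j-1) < t α * j' then
          (C α β : ℚ) / (t α : ℚ) * (((t α * j' : ℕ) : ℚ) - ((t β * (j-1) : ℕ) : ℚ)) * (m β j' : ℚ)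
        else 0)
      - ∑ β, ∑ j' ∈ Icc 1 (t β * k),
        if t β * j < t α * j' then
          (C α β : ℚ) / (t α : ℚ) * (((t α * j' : ℕ) : ℚ) - ((t β * j : ℕ) : ℚ)) * (m β j' : ℚ)
        else 0)
      = (∑ β, ((C α β : ℚ) * (t β : ℚ) / (t α : ℚ)) * mfun r t0 t k m (t0*(j-1)+i) β)
        + ∑ β, (if t β = t0 then (C α β : ℚ) * eVec r t0 m j i β else 0) := by
    rw [← Finset.sum_sub_distrib]
    rw [Finset.sum_congr rfl (fun β _ => hmpart β)]
    rw [Finset.sum_add_distrib]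
  rw [Finset.sum_filter]
  linarith [hnpart, hm2]


lemma sum_sum_swap (T : ℕ) (f : ℕ → ℚ) :
    ∑ i ∈ Icc 1 T, ∑ s ∈ Icc i (T-1), f s = ∑ s ∈ Icc 1 (T-1), (s:ℚ) * f s := by
  rw [Finset.sum_congr rfl (fun i hi =>
    (sum_ite_ge (T-1) i f (by simp only [mem_Icc] at hi; omega)).symm)]
  rw [Finset.sum_comm]
  refine Finset.sum_congr rfl (fun s hs => ?_)
  simp only [mem_Icc] at hs
  rw [sum_ite_le T s (by omega) (fun _ => f s), Finset.sum_const, Nat.card_Icc]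
  rw [show s + 1 - 1 = s by omega, nsmul_eq_mul]

lemma eVec_split (r t0 : ℕ) (m : Fin r → ℕ → ℕ) (j i : ℕ) (β : Fin r)
    (hi1 : 1 ≤ i) (hi2 : i ≤ t0) :
    eVec r t0 m j i β = eVec r t0 m j t0 β
      - (t0:ℚ) * ∑ s ∈ Icc i (t0-1), (m β (t0*(j-1)+s) : ℚ) := by
  unfold eVec
  rw [Icc_eq_empty (by omega : ¬ t0 ≤ t0 - 1), Finset.sum_empty, add_zero]
  rw [show Icc 1 (t0-1) = Icc 1 (i-1) ∪ Icc i (t0-1) by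
    ext x; simp only [mem_union, mem_Icc]; omega]
  rw [Finset.sum_union (by
    rw [Finset.disjoint_left]; intro x hx hx'
    simp only [mem_Icc] at hx hx'; omega)]
  rw [Finset.mul_sum]
  rw [show (∑ s ∈ Icc i (t0-1), ((s:ℚ) - (t0:ℚ)) * (m β (t0*(j-1)+s) : ℚ))
      = ∑ s ∈ Icc i (t0-1), ((s:ℚ) * (m β (t0*(j-1)+s) : ℚ) - (t0:ℚ) * (m β (t0*(j-1)+s) : ℚ)) by
    exact Finset.sum_congr rfl (fun s _ => by ring)]
  rw [Finset.sum_sub_distrib]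
  ring

lemma eVec_sum_zero (r t0 : ℕ) (m : Fin r → ℕ → ℕ) (j : ℕ) (β : Fin r) (ht0 : 1 ≤ t0) :
    ∑ i ∈ Icc 1 t0, eVec r t0 m j i β = 0 := by
  rw [Finset.sum_congr rfl (fun i hi => eVec_split r t0 m j i β
    (by simp only [mem_Icc] at hi; omega) (by simp only [mem_Icc] at hi; omega))]
  rw [Finset.sum_sub_distrib, Finset.sum_const, Nat.card_Icc]
  rw [show t0 + 1 - 1 = t0 by omega, nsmul_eq_mul, ← Finset.mul_sum]
  rw [sum_sum_swap t0 (fun s => (m β (t0*(j-1)+s) : ℚ))]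
  have : eVec r t0 m j t0 β = ∑ s ∈ Icc 1 (t0-1), (s:ℚ) * (m β (t0*(j-1)+s) : ℚ) := by
    unfold eVec
    rw [Icc_eq_empty (by omega : ¬ t0 ≤ t0 - 1), Finset.sum_empty, add_zero]
  rw [this]
  ring

lemma mfun_fVec (r : ℕ) (t : Fin r → ℕ) (k t0 : ℕ) (n : Fin r → ℕ → ℕ) (β : Fin r)
    (hβ : t β = t0) (ht0 : 0 < t0) (j i : ℕ) (hj1 : 1 ≤ j) (hj2 : j ≤ k)
    (hi1 : 1 ≤ i) (hi2 : i ≤ t0) :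
    mfun r t0 t k n (t0*(j-1)+i) β = fVec r t0 n j i β + mfun r t0 t k n (t0*j) β := by
  have hN : t0*(j-1) + t0 = t0 * j := by
    have h : j - 1 + 1 = j := by omega
    calc t0*(j-1) + t0 = t0 * ((j-1)+1) := by ring
    _ = t0 * j := by rw [h]
  have hNk : t0 * j ≤ t0 * k := Nat.mul_le_mul_left t0 hj2
  rw [mfun_long r t0 t k n (t0*(j-1)+i) β hβ ht0 (by omega)]
  rw [mfun_long r t0 t k n (t0*j) β hβ ht0 (by omega)]
  unfold fVec
  rw [show (∑ s ∈ Icc i (t0-1), (n β (t0*(j-1)+s) : ℚ))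
      = ∑ j' ∈ Icc (t0*(j-1)+i) (t0*(j-1)+(t0-1)), (n β j' : ℚ) from
    sum_shift (t0*(j-1)) i (t0-1) (fun x => (n β x : ℚ))]
  rw [← Finset.sum_union (by
    rw [Finset.disjoint_left]; intro x hx hx'
    simp only [mem_Icc] at hx hx'; omega)]
  congr 1
  ext x
  simp only [mem_union, mem_Icc]
  omega

lemma bilin_contract_left (r : ℕ) (H Ch : Fin r → Fin r → ℚ) (d : Fin r → ℚ)
    (h : ∀ γ β, ∑ α, Ch α γ * H α β = if γ = β then d β else 0) (p q : Fin r → ℚ) :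
    ∑ α, ∑ β, (∑ γ, Ch α γ * p γ) * H α β * q β = ∑ γ, d γ * p γ * q γ := by
  have step1 : ∀ α : Fin r, ∑ β, (∑ γ, Ch α γ * p γ) * H α β * q β
      = ∑ β, ∑ γ, Ch α γ * H α β * (p γ * q β) := by
    intro α
    refine Finset.sum_congr rfl (fun β _ => ?_)
    rw [Finset.sum_mul, Finset.sum_mul]
    exact Finset.sum_congr rfl (fun γ _ => by ring)
  rw [Finset.sum_congr rfl (fun α _ => step1 α)]
  rw [Finset.sum_comm]
  rw [Finset.sum_congr rfl (fun β (_ : β ∈ univ) => Finset.sum_comm (γ := Fin r))]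
  rw [Finset.sum_comm]
  refine Finset.sum_congr rfl (fun γ _ => ?_)
  have step2 : ∀ β : Fin r, ∑ α, Ch α γ * H α β * (p γ * q β)
      = (if γ = β then d β else 0) * (p γ * q β) := by
    intro β
    rw [← Finset.sum_mul, h γ β]
  rw [Finset.sum_congr rfl (fun β _ => step2 β)]
  rw [Finset.sum_congr rfl (fun β (_ : β ∈ univ) => by
    rw [ite_mul, zero_mul])]
  rw [Finset.sum_ite_eq]
  simp only [mem_univ, if_pos]
  ring

lemma bilin_contract_right (r : ℕ) (H Ch : Fin r → Fin r → ℚ) (d : Fin r → ℚ)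
    (h : ∀ α γ, ∑ β, H α β * Ch β γ = if α = γ then d γ else 0) (p q : Fin r → ℚ) :
    ∑ α, ∑ β, p α * H α β * (∑ γ, Ch β γ * q γ) = ∑ γ, d γ * p γ * q γ := by
  have step1 : ∀ α : Fin r, ∑ β, p α * H α β * (∑ γ, Ch β γ * q γ)
      = ∑ γ, (∑ β, H α β * Ch β γ) * (p α * q γ) := by
    intro α
    have e1 : ∀ β : Fin r, p α * H α β * (∑ γ, Ch β γ * q γ)
        = ∑ γ, H α β * Ch β γ * (p α * q γ) := by
      intro β
      rw [Finset.mul_sum]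
      exact Finset.sum_congr rfl (fun γ _ => by ring)
    rw [Finset.sum_congr rfl (fun β _ => e1 β), Finset.sum_comm]
    refine Finset.sum_congr rfl (fun γ _ => ?_)
    rw [Finset.sum_mul]
  rw [Finset.sum_congr rfl (fun α _ => step1 α)]
  rw [Finset.sum_congr rfl (fun α (_ : α ∈ univ) => Finset.sum_congr rfl (fun γ (_ : γ ∈ univ) => by
    rw [h α γ, ite_mul, zero_mul]))]
  rw [Finset.sum_comm]
  refine Finset.sum_congr rfl (fun γ _ => ?_)
  rw [Finset.sum_ite_eq']
  simp only [mem_univ, if_pos]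
  try ring

lemma min_scaled (t0 a b i j : ℕ) (ha : a = 1 ∨ a = t0) (hb : b = 1 ∨ b = t0) (ht0 : 0 < t0) :
    ((min ((t0/a)*i) ((t0/b)*j) : ℕ):ℚ) * (a:ℚ) * (b:ℚ) = ((min (a*j) (b*i) : ℕ):ℚ) * (t0:ℚ) := by
  have hmin : ∀ (x y : ℕ), ((min x y : ℕ):ℚ) = min (x:ℚ) (y:ℚ) := fun x y => by
    push_cast [Nat.cast_min]; rfl
  rcases ha with ha | ha <;> rcases hb with hb | hb <;> rw [ha, hb] <;>
    simp only [Nat.div_one, Nat.div_self ht0, one_mul, mul_one] <;>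
    rcases Nat.le_total i j with hij | hij
  · rw [min_eq_left (Nat.mul_le_mul_left t0 hij), min_eq_right hij]; push_cast; ring
  · rw [min_eq_right (Nat.mul_le_mul_left t0 hij), min_eq_left hij]; push_cast; ring
  · rcases Nat.le_total (t0*i) j with h2 | h2
    · rw [min_eq_left h2, min_eq_right h2]; push_cast; ring
    · rw [min_eq_right h2, min_eq_left h2]; push_cast; ring
  · rcases Nat.le_total (t0*i) j with h2 | h2
    · rw [min_eq_left h2, min_eq_right h2]; push_cast; ring
    · rw [min_eq_right h2, min_eq_left h2]; push_cast; ring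
  · rcases Nat.le_total i (t0*j) with h2 | h2
    · rw [min_eq_left h2, min_eq_right h2]; push_cast; ring
    · rw [min_eq_right h2, min_eq_left h2]; push_cast; ring
  · rcases Nat.le_total i (t0*j) with h2 | h2
    · rw [min_eq_left h2, min_eq_right h2]; push_cast; ring
    · rw [min_eq_right h2, min_eq_left h2]; push_cast; ring
  · rw [min_eq_left hij, min_eq_right (Nat.mul_le_mul_left t0 hij)]; push_cast; ring
  · rw [min_eq_right hij, min_eq_left (Nat.mul_le_mul_left t0 hij)]; push_cast; ring

lemma part1 (r t0 k : ℕ) (t : Fin r → ℕ) (htval : ∀ β, t β = 1 ∨ t β = t0) (ht0 : 0 < t0)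
    (P : Fin r → Fin r → ℚ) (g h : Fin r → ℕ → ℕ) :
    ∑ u ∈ Icc 1 (t0*k), ∑ α, ∑ β, P α β * mfun r t0 t k g u α * mfun r t0 t k h u β
      = ∑ α, ∑ β, ∑ i ∈ Icc 1 (t α * k), ∑ j ∈ Icc 1 (t β * k),
          P α β * (((min (t α * j) (t β * i) : ℕ):ℚ) * (t0:ℚ) / ((t α : ℚ) * (t β : ℚ)))
            * (g α i : ℚ) * (h β j : ℚ) := by
  rw [Finset.sum_comm]
  refine Finset.sum_congr rfl (fun α _ => ?_)
  rw [Finset.sum_comm]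
  refine Finset.sum_congr rfl (fun β _ => ?_)
  -- Σ_u P * mfun g u α * mfun h u β = Σ_i Σ_j ...
  have expand : ∀ u : ℕ, P α β * mfun r t0 t k g u α * mfun r t0 t k h u β
      = ∑ i ∈ Icc 1 (t α * k), ∑ j ∈ Icc 1 (t β * k),
          P α β * (g α i : ℚ) * (h β j : ℚ)
            * ((if u ≤ (t0 / t α) * i then (1:ℚ) else 0) * (if u ≤ (t0 / t β) * j then (1:ℚ) else 0)) := by
    intro u
    unfold mfun
    rw [mul_assoc, Finset.sum_mul_sum, Finset.mul_sum]
    refine Finset.sum_congr rfl (fun i hi => ?_)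
    rw [Finset.mul_sum]
    refine Finset.sum_congr rfl (fun j hj => ?_)
    have hcondα : (t α * u ≤ t0 * i) ↔ (u ≤ (t0 / t α) * i) := by
      rcases htval α with hh | hh <;> rw [hh]
      · simp only [Nat.div_one, one_mul]
      · rw [Nat.div_self ht0, one_mul]
        exact ⟨fun hc => Nat.le_of_mul_le_mul_left hc ht0, fun hc => Nat.mul_le_mul_left t0 hc⟩
    have hcondβ : (t β * u ≤ t0 * j) ↔ (u ≤ (t0 / t β) * j) := by
      rcases htval β with hh | hh <;> rw [hh]
      · simp only [Nat.div_one, one_mul]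
      · rw [Nat.div_self ht0, one_mul]
        exact ⟨fun hc => Nat.le_of_mul_le_mul_left hc ht0, fun hc => Nat.mul_le_mul_left t0 hc⟩
    simp only [hcondα, hcondβ]
    split_ifs <;> ring
  rw [Finset.sum_congr rfl (fun u _ => expand u)]
  rw [Finset.sum_comm]
  refine Finset.sum_congr rfl (fun i hi => ?_)
  rw [Finset.sum_comm]
  refine Finset.sum_congr rfl (fun j hj => ?_)
  rw [← Finset.mul_sum]
  simp only [mem_Icc] at hi hj
  have hAle : (t0 / t α) * i ≤ t0 * k := by
    rcases htval α with hh | hh <;> rw [hh] at hi ⊢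
    · simp only [Nat.div_one]
      exact Nat.mul_le_mul_left t0 (by omega)
    · rw [Nat.div_self ht0, one_mul]; omega
  have hBle : (t0 / t β) * j ≤ t0 * k := by
    rcases htval β with hh | hh <;> rw [hh] at hj ⊢
    · simp only [Nat.div_one]
      exact Nat.mul_le_mul_left t0 (by omega)
    · rw [Nat.div_self ht0, one_mul]; omega
  rw [count_min (t0*k) ((t0 / t α) * i) ((t0 / t β) * j) hAle hBle]
  have hmm := min_scaled t0 (t α) (t β) i j (htval α) (htval β) ht0
  have htα : ((t α : ℚ)) ≠ 0 := by
    rcases htval α with hh | hh <;> rw [hh] <;> positivity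
  have htβ : ((t β : ℚ)) ≠ 0 := by
    rcases htval β with hh | hh <;> rw [hh] <;> positivity
  rw [show P α β * (((min (t α * j) (t β * i) : ℕ):ℚ) * (t0:ℚ) / ((t α : ℚ) * (t β : ℚ)))
        * (g α i : ℚ) * (h β j : ℚ)
      = P α β * (g α i : ℚ) * (h β j : ℚ)
        * (((min (t α * j) (t β * i) : ℕ):ℚ) * (t0:ℚ) / ((t α : ℚ) * (t β : ℚ))) by ring]
  congr 1
  rw [eq_div_iff (mul_ne_zero htα htβ)]
  linear_combination hmm


def Cq (r : ℕ) (C : Fin r → Fin r → ℤ) (t : Fin r → ℕ) (α β : Fin r) : ℚ :=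
  (C α β : ℚ) * (t β : ℚ) / (t α : ℚ)

def Hq (r : ℕ) (Λ : Fin r → Fin r → ℤ) (t : Fin r → ℕ) (t0 : ℕ) (α β : Fin r) : ℚ :=
  (Λ α β : ℚ) * (t β : ℚ) / (t0 : ℚ)

def Efun (r : ℕ) (C : Fin r → Fin r → ℤ) (t : Fin r → ℕ) (t0 : ℕ) (m : Fin r → ℕ → ℕ)
    (j i : ℕ) (γ : Fin r) : ℚ :=
  if t γ = 1 then ∑ b ∈ univ.filter (fun b => t b = t0), (C γ b : ℚ) * eVec r t0 m j i b else 0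

lemma Adecomp (r : ℕ) (C Λ : Fin r → Fin r → ℤ) (t : Fin r → ℕ) (k t0 : ℕ) (ℓ : Fin r → ℕ)
    (δ : ℤ) (m n : Fin r → ℕ → ℕ)
    (htpos : ∀ α, 0 < t α)
    (htval : ∀ β, t β = 1 ∨ t β = t0) (ht0 : 1 < t0)
    (hsym : ∀ α β, (t β : ℤ) * C α β = (t α : ℤ) * C β α)
    (hCΛ : ∀ a b, ∑ ω, C a ω * Λ ω b = if a = b then δ else 0)
    (hΛC : ∀ a b, ∑ ω, Λ a ω * C ω b = if a = b then δ else 0)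
    (j i : ℕ) (hj1 : 1 ≤ j) (hj2 : j ≤ k) (hi1 : 1 ≤ i) (hi2 : i ≤ t0) :
    ∑ α, ∑ β, (if t α = 1 then qmod r C t k ℓ m n α (j-1) - qmod r C t k ℓ m n α j
        else qmod r C t k ℓ m n α (t0*(j-1)+i-1) - qmod r C t k ℓ m n α (t0*(j-1)+i))
      * Hq r Λ t t0 α β
      * (if t β = 1 then qmod r C t k ℓ m n β (j-1) - qmod r C t k ℓ m n β j
        else qmod r C t k ℓ m n β (t0*(j-1)+i-1) - qmod r C t k ℓ m n β (t0*(j-1)+i))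
    = ((∑ γ, ∑ γ', ((δ:ℚ) * (t γ:ℚ)/(t0:ℚ)) * Cq r C t γ γ'
            * mfun r t0 t k m (t0*(j-1)+i) γ * mfun r t0 t k m (t0*(j-1)+i) γ')
        - 2 * (∑ γ, ((δ:ℚ) * (t γ:ℚ)/(t0:ℚ)) * mfun r t0 t k m (t0*(j-1)+i) γ
            * mfun r t0 t k n (t0*(j-1)+i) γ)
        + (∑ γ, ∑ γ', Hq r Λ t t0 γ γ' * mfun r t0 t k n (t0*(j-1)+i) γ
            * mfun r t0 t k n (t0*(j-1)+i) γ'))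
      + ( 2*(∑ γ, ((δ:ℚ)*(t γ:ℚ)/(t0:ℚ)) * mfun r t0 t k m (t0*(j-1)+i) γ * Efun r C t t0 m j i γ)
          + (∑ α, ∑ β, Efun r C t t0 m j i α * Hq r Λ t t0 α β * Efun r C t t0 m j i β)
          - (∑ α, ∑ β, Efun r C t t0 m j i α * Hq r Λ t t0 α β * mfun r t0 t k n (t0*(j-1)+i) β)
          - (∑ α, ∑ β, mfun r t0 t k n (t0*(j-1)+i) α * Hq r Λ t t0 α β * Efun r C t t0 m j i β)) := by
  have ht0pos : 0 < t0 := by omega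
  have hCH := CH_contract r C Λ t t0 δ htpos hsym hCΛ
  have hHC := HC_contract r C Λ t t0 δ htpos hΛC
  have hCH' : ∀ γ β : Fin r, ∑ α, Cq r C t α γ * Hq r Λ t t0 α β
      = if γ = β then ((δ:ℚ)*(t β:ℚ)/(t0:ℚ)) else 0 := by
    intro γ β
    have h := hCH γ β
    unfold Cq Hq
    rw [h]
    split_ifs with hh
    · rw [hh]
    · rfl
  have hHC' : ∀ α γ : Fin r, ∑ β, Hq r Λ t t0 α β * Cq r C t β γ
      = if α = γ then ((δ:ℚ)*(t γ:ℚ)/(t0:ℚ)) else 0 := by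
    intro α γ
    have h := hHC α γ
    unfold Cq Hq
    rw [h]
  -- express each W as P + E - N
  have hW : ∀ α : Fin r,
      (if t α = 1 then qmod r C t k ℓ m n α (j-1) - qmod r C t k ℓ m n α j
        else qmod r C t k ℓ m n α (t0*(j-1)+i-1) - qmod r C t k ℓ m n α (t0*(j-1)+i))
      = (∑ β, Cq r C t α β * mfun r t0 t k m (t0*(j-1)+i) β) + Efun r C t t0 m j i α
        - mfun r t0 t k n (t0*(j-1)+i) α := by
    intro α
    unfold Cq Efun
    by_cases hα : t α = 1
    · rw [if_pos hα, if_pos hα]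
      have h := qdiff_short r C t k t0 ℓ m n htval ht0 α hα j i hj1 hj2 hi1 hi2
      rw [h]
      try ring
    · have hα' : t α = t0 := (htval α).resolve_left hα
      rw [if_neg hα, if_neg hα]
      have h := qdiff_long r C t k t0 ℓ m n htval ht0pos α hα' (t0*(j-1)+i) (by omega)
      rw [h]
      try ring
  rw [Finset.sum_congr rfl (fun α (_ : α ∈ univ) => Finset.sum_congr rfl (fun β (_ : β ∈ univ) => by
    rw [hW α, hW β]))]
  -- expand into 9 double sums
  have point : ∀ α β : Fin r,
      ((∑ β', Cq r C t α β' * mfun r t0 t k m (t0*(j-1)+i) β') + Efun r C t t0 m j i α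
          - mfun r t0 t k n (t0*(j-1)+i) α)
        * Hq r Λ t t0 α β
        * ((∑ β', Cq r C t β β' * mfun r t0 t k m (t0*(j-1)+i) β') + Efun r C t t0 m j i β
          - mfun r t0 t k n (t0*(j-1)+i) β)
      = (∑ β', Cq r C t α β' * mfun r t0 t k m (t0*(j-1)+i) β') * Hq r Λ t t0 α β
          * (∑ β', Cq r C t β β' * mfun r t0 t k m (t0*(j-1)+i) β')
        + (∑ β', Cq r C t α β' * mfun r t0 t k m (t0*(j-1)+i) β') * Hq r Λ t t0 α β
          * Efun r C t t0 m j i β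
        - (∑ β', Cq r C t α β' * mfun r t0 t k m (t0*(j-1)+i) β') * Hq r Λ t t0 α β
          * mfun r t0 t k n (t0*(j-1)+i) β
        + Efun r C t t0 m j i α * Hq r Λ t t0 α β
          * (∑ β', Cq r C t β β' * mfun r t0 t k m (t0*(j-1)+i) β')
        + Efun r C t t0 m j i α * Hq r Λ t t0 α β * Efun r C t t0 m j i β
        - Efun r C t t0 m j i α * Hq r Λ t t0 α β * mfun r t0 t k n (t0*(j-1)+i) β
        - mfun r t0 t k n (t0*(j-1)+i) α * Hq r Λ t t0 α β
          * (∑ β', Cq r C t β β' * mfun r t0 t k m (t0*(j-1)+i) β')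
        - mfun r t0 t k n (t0*(j-1)+i) α * Hq r Λ t t0 α β * Efun r C t t0 m j i β
        + mfun r t0 t k n (t0*(j-1)+i) α * Hq r Λ t t0 α β * mfun r t0 t k n (t0*(j-1)+i) β := by
    intro α β; ring
  rw [Finset.sum_congr rfl (fun α (_ : α ∈ univ) => Finset.sum_congr rfl (fun β (_ : β ∈ univ) =>
    point α β))]
  simp only [Finset.sum_add_distrib, Finset.sum_sub_distrib]
  have cPP : ∑ α, ∑ β, (∑ β', Cq r C t α β' * mfun r t0 t k m (t0*(j-1)+i) β')
        * Hq r Λ t t0 α β * (∑ β', Cq r C t β β' * mfun r t0 t k m (t0*(j-1)+i) β')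
      = ∑ γ, ((δ:ℚ)*(t γ:ℚ)/(t0:ℚ)) * mfun r t0 t k m (t0*(j-1)+i) γ
          * (∑ β', Cq r C t γ β' * mfun r t0 t k m (t0*(j-1)+i) β') :=
    bilin_contract_left r (Hq r Λ t t0) (Cq r C t) (fun γ => (δ:ℚ)*(t γ:ℚ)/(t0:ℚ)) hCH'
      (fun γ => mfun r t0 t k m (t0*(j-1)+i) γ)
      (fun β => ∑ β', Cq r C t β β' * mfun r t0 t k m (t0*(j-1)+i) β')
  have cPE : ∑ α, ∑ β, (∑ β', Cq r C t α β' * mfun r t0 t k m (t0*(j-1)+i) β')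
        * Hq r Λ t t0 α β * Efun r C t t0 m j i β
      = ∑ γ, ((δ:ℚ)*(t γ:ℚ)/(t0:ℚ)) * mfun r t0 t k m (t0*(j-1)+i) γ * Efun r C t t0 m j i γ :=
    bilin_contract_left r (Hq r Λ t t0) (Cq r C t) (fun γ => (δ:ℚ)*(t γ:ℚ)/(t0:ℚ)) hCH'
      (fun γ => mfun r t0 t k m (t0*(j-1)+i) γ) (Efun r C t t0 m j i)
  have cPN : ∑ α, ∑ β, (∑ β', Cq r C t α β' * mfun r t0 t k m (t0*(j-1)+i) β')
        * Hq r Λ t t0 α β * mfun r t0 t k n (t0*(j-1)+i) β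
      = ∑ γ, ((δ:ℚ)*(t γ:ℚ)/(t0:ℚ)) * mfun r t0 t k m (t0*(j-1)+i) γ
          * mfun r t0 t k n (t0*(j-1)+i) γ :=
    bilin_contract_left r (Hq r Λ t t0) (Cq r C t) (fun γ => (δ:ℚ)*(t γ:ℚ)/(t0:ℚ)) hCH'
      (fun γ => mfun r t0 t k m (t0*(j-1)+i) γ) (fun γ => mfun r t0 t k n (t0*(j-1)+i) γ)
  have cEP : ∑ α, ∑ β, Efun r C t t0 m j i α * Hq r Λ t t0 α β
        * (∑ β', Cq r C t β β' * mfun r t0 t k m (t0*(j-1)+i) β')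
      = ∑ γ, ((δ:ℚ)*(t γ:ℚ)/(t0:ℚ)) * Efun r C t t0 m j i γ * mfun r t0 t k m (t0*(j-1)+i) γ :=
    bilin_contract_right r (Hq r Λ t t0) (Cq r C t) (fun γ => (δ:ℚ)*(t γ:ℚ)/(t0:ℚ)) hHC'
      (Efun r C t t0 m j i) (fun γ => mfun r t0 t k m (t0*(j-1)+i) γ)
  have cNP : ∑ α, ∑ β, mfun r t0 t k n (t0*(j-1)+i) α * Hq r Λ t t0 α β
        * (∑ β', Cq r C t β β' * mfun r t0 t k m (t0*(j-1)+i) β')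
      = ∑ γ, ((δ:ℚ)*(t γ:ℚ)/(t0:ℚ)) * mfun r t0 t k n (t0*(j-1)+i) γ
          * mfun r t0 t k m (t0*(j-1)+i) γ :=
    bilin_contract_right r (Hq r Λ t t0) (Cq r C t) (fun γ => (δ:ℚ)*(t γ:ℚ)/(t0:ℚ)) hHC'
      (fun γ => mfun r t0 t k n (t0*(j-1)+i) γ) (fun γ => mfun r t0 t k m (t0*(j-1)+i) γ)
  rw [cPP, cPE, cPN, cEP, cNP]
  have ePP : ∑ γ, ((δ:ℚ)*(t γ:ℚ)/(t0:ℚ)) * mfun r t0 t k m (t0*(j-1)+i) γ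
        * (∑ β', Cq r C t γ β' * mfun r t0 t k m (t0*(j-1)+i) β')
      = ∑ γ, ∑ γ', ((δ:ℚ) * (t γ:ℚ)/(t0:ℚ)) * Cq r C t γ γ'
          * mfun r t0 t k m (t0*(j-1)+i) γ * mfun r t0 t k m (t0*(j-1)+i) γ' := by
    refine Finset.sum_congr rfl (fun γ _ => ?_)
    rw [Finset.mul_sum]
    refine Finset.sum_congr rfl (fun γ' _ => by ring)
  rw [ePP]
  have swapEP : ∑ γ, ((δ:ℚ)*(t γ:ℚ)/(t0:ℚ)) * Efun r C t t0 m j i γ * mfun r t0 t k m (t0*(j-1)+i) γ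
      = ∑ γ, ((δ:ℚ)*(t γ:ℚ)/(t0:ℚ)) * mfun r t0 t k m (t0*(j-1)+i) γ * Efun r C t t0 m j i γ :=
    Finset.sum_congr rfl (fun γ _ => by ring)
  have swapNP : ∑ γ, ((δ:ℚ)*(t γ:ℚ)/(t0:ℚ)) * mfun r t0 t k n (t0*(j-1)+i) γ
        * mfun r t0 t k m (t0*(j-1)+i) γ
      = ∑ γ, ((δ:ℚ)*(t γ:ℚ)/(t0:ℚ)) * mfun r t0 t k m (t0*(j-1)+i) γ
          * mfun r t0 t k n (t0*(j-1)+i) γ :=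
    Finset.sum_congr rfl (fun γ _ => by ring)
  have swapNN : ∑ α, ∑ β, mfun r t0 t k n (t0*(j-1)+i) α * Hq r Λ t t0 α β
        * mfun r t0 t k n (t0*(j-1)+i) β
      = ∑ γ, ∑ γ', Hq r Λ t t0 γ γ' * mfun r t0 t k n (t0*(j-1)+i) γ
          * mfun r t0 t k n (t0*(j-1)+i) γ' :=
    Finset.sum_congr rfl (fun γ _ => Finset.sum_congr rfl (fun γ' _ => by ring))
  rw [swapEP, swapNP, swapNN]
  ring


lemma sum_partition (r t0 : ℕ) (t : Fin r → ℕ) (htval : ∀ β, t β = 1 ∨ t β = t0)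
    (ht0 : 1 < t0) (f : Fin r → ℚ) :
    ∑ α, f α = (∑ a ∈ univ.filter (fun a => t a = 1), f a)
      + (∑ b ∈ univ.filter (fun b => t b = t0), f b) := by
  rw [← Finset.sum_filter_add_sum_filter_not univ (fun a => t a = 1) f]
  congr 1
  refine Finset.sum_congr ?_ (fun _ _ => rfl)
  ext a
  simp only [mem_filter, mem_univ, true_and]
  rcases htval a with h | h <;> rw [h] <;> omega

def Xf (r : ℕ) (C : Fin r → Fin r → ℤ) (t : Fin r → ℕ) (t0 : ℕ) (m : Fin r → ℕ → ℕ)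
    (j i : ℕ) (a : Fin r) : ℚ :=
  ∑ b ∈ univ.filter (fun b => t b = t0), (C a b : ℚ) * eVec r t0 m j i b

lemma Efun_eq (r : ℕ) (C : Fin r → Fin r → ℤ) (t : Fin r → ℕ) (t0 : ℕ) (m : Fin r → ℕ → ℕ)
    (j i : ℕ) (γ : Fin r) :
    Efun r C t t0 m j i γ = if t γ = 1 then Xf r C t t0 m j i γ else 0 := rfl

lemma Xf_sum_zero (r : ℕ) (C : Fin r → Fin r → ℤ) (t : Fin r → ℕ) (t0 : ℕ) (m : Fin r → ℕ → ℕ)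
    (j : ℕ) (ht0 : 1 ≤ t0) (a : Fin r) :
    ∑ i ∈ Icc 1 t0, Xf r C t t0 m j i a = 0 := by
  unfold Xf
  rw [Finset.sum_comm]
  refine Finset.sum_eq_zero (fun b _ => ?_)
  rw [← Finset.mul_sum, eVec_sum_zero r t0 m j b ht0, mul_zero]

lemma kill_const (r : ℕ) (C : Fin r → Fin r → ℤ) (t : Fin r → ℕ) (t0 : ℕ) (m : Fin r → ℕ → ℕ)
    (j : ℕ) (ht0 : 1 ≤ t0) (c : Fin r → ℚ) :
    ∑ i ∈ Icc 1 t0, ∑ a ∈ univ.filter (fun a => t a = 1), Xf r C t t0 m j i a * c a = 0 := by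
  rw [Finset.sum_comm]
  refine Finset.sum_eq_zero (fun a _ => ?_)
  rw [← Finset.sum_mul, Xf_sum_zero r C t t0 m j ht0 a, zero_mul]

lemma Xf_def (r : ℕ) (C : Fin r → Fin r → ℤ) (t : Fin r → ℕ) (t0 : ℕ) (m : Fin r → ℕ → ℕ)
    (j i : ℕ) (a : Fin r) :
    (∑ b ∈ univ.filter (fun b => t b = t0), (C a b : ℚ) * eVec r t0 m j i b)
      = Xf r C t t0 m j i a := rfl

lemma swapX (r : ℕ) (C : Fin r → Fin r → ℤ) (t : Fin r → ℕ) (t0 : ℕ) (m : Fin r → ℕ → ℕ)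
    (j i : ℕ) (G : Fin r → ℚ) :
    ∑ β ∈ univ.filter (fun β : Fin r => t β = t0), eVec r t0 m j i β *
        ∑ a ∈ univ.filter (fun a => t a = 1), (C a β : ℚ) * G a
      = ∑ a ∈ univ.filter (fun a => t a = 1), Xf r C t t0 m j i a * G a := by
  rw [Finset.sum_congr rfl (fun β (_ : β ∈ univ.filter (fun β : Fin r => t β = t0)) =>
    Finset.mul_sum (univ.filter (fun a : Fin r => t a = 1))
      (fun a => (C a β : ℚ) * G a) (eVec r t0 m j i β))]
  rw [Finset.sum_comm]
  refine Finset.sum_congr rfl (fun a _ => ?_)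
  unfold Xf
  rw [Finset.sum_mul]
  exact Finset.sum_congr rfl (fun β _ => by ring)

lemma Eterm (r : ℕ) (C Λ : Fin r → Fin r → ℤ) (t : Fin r → ℕ) (k t0 : ℕ) (δ : ℤ)
    (m n : Fin r → ℕ → ℕ)
    (htval : ∀ β, t β = 1 ∨ t β = t0) (ht0 : 1 < t0)
    (hsymΛ : ∀ a b, (t b : ℤ) * Λ a b = (t a : ℤ) * Λ b a)
    (j : ℕ) (hj1 : 1 ≤ j) (hj2 : j ≤ k) :
    ∑ i ∈ Icc 1 t0,
      ( 2*(∑ γ, ((δ:ℚ)*(t γ:ℚ)/(t0:ℚ)) * mfun r t0 t k m (t0*(j-1)+i) γ * Efun r C t t0 m j i γ)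
        + (∑ α, ∑ β, Efun r C t t0 m j i α * Hq r Λ t t0 α β * Efun r C t t0 m j i β)
        - (∑ α, ∑ β, Efun r C t t0 m j i α * Hq r Λ t t0 α β * mfun r t0 t k n (t0*(j-1)+i) β)
        - (∑ α, ∑ β, mfun r t0 t k n (t0*(j-1)+i) α * Hq r Λ t t0 α β * Efun r C t t0 m j i β))
      = Uj r C t t0 Λ m n j := by
  have ht0q : ((t0:ℚ)) ≠ 0 := by positivity
  have ht0pos : 0 < t0 := by omega
  have hN : t0*(j-1) + t0 = t0 * j := by
    have h : j - 1 + 1 = j := by omega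
    calc t0*(j-1) + t0 = t0 * ((j-1)+1) := by ring
    _ = t0 * j := by rw [h]
  have hT1 : ∑ i ∈ Icc 1 t0,
      2*(∑ γ, ((δ:ℚ)*(t γ:ℚ)/(t0:ℚ)) * mfun r t0 t k m (t0*(j-1)+i) γ * Efun r C t t0 m j i γ)
      = 0 := by
    have key : ∀ i ∈ Icc 1 t0, (∑ γ, ((δ:ℚ)*(t γ:ℚ)/(t0:ℚ)) * mfun r t0 t k m (t0*(j-1)+i) γ
        * Efun r C t t0 m j i γ)
        = ∑ a ∈ univ.filter (fun a => t a = 1), Xf r C t t0 m j i a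
            * (((δ:ℚ)*(t a:ℚ)/(t0:ℚ)) * (∑ i' ∈ Icc j k, (m a i' : ℚ))) := by
      intro i hi
      simp only [mem_Icc] at hi
      rw [Finset.sum_filter]
      refine Finset.sum_congr rfl (fun γ _ => ?_)
      rw [Efun_eq]
      by_cases hγ : t γ = 1
      · rw [if_pos hγ, if_pos hγ]
        rw [mfun_short r t0 t k m (t0*(j-1)+i) γ hγ j hj1 (by omega) (by omega)]
        ring
      · rw [if_neg hγ, if_neg hγ, mul_zero]
    rw [Finset.sum_congr rfl (fun i hi => by rw [key i hi])]
    rw [← Finset.mul_sum,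
      kill_const r C t t0 m j (by omega)
        (fun a => ((δ:ℚ)*(t a:ℚ)/(t0:ℚ)) * (∑ i' ∈ Icc j k, (m a i' : ℚ))), mul_zero]
  have reduceE : ∀ (i : ℕ) (g : Fin r → ℚ),
      (∑ α, ∑ β, Efun r C t t0 m j i α * Hq r Λ t t0 α β * g β)
      = ∑ a ∈ univ.filter (fun a => t a = 1), Xf r C t t0 m j i a
          * (∑ β, Hq r Λ t t0 a β * g β) := by
    intro i g
    rw [Finset.sum_filter]
    refine Finset.sum_congr rfl (fun α _ => ?_)
    rw [Efun_eq]
    by_cases hγ : t α = 1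
    · rw [if_pos hγ, if_pos hγ, Finset.mul_sum]
      refine Finset.sum_congr rfl (fun β _ => by ring)
    · rw [if_neg hγ, if_neg hγ]
      exact Finset.sum_eq_zero (fun β _ => by rw [zero_mul, zero_mul])
  have hT2 : ∑ i ∈ Icc 1 t0,
      (∑ α, ∑ β, Efun r C t t0 m j i α * Hq r Λ t t0 α β * Efun r C t t0 m j i β)
      = (1/(t0:ℚ)) * ∑ i ∈ Icc 1 t0, ∑ a ∈ univ.filter (fun a => t a = 1),
          Xf r C t t0 m j i a
            * (∑ b ∈ univ.filter (fun b => t b = 1), (Λ a b : ℚ) * Xf r C t t0 m j i b) := by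
    rw [Finset.mul_sum]
    refine Finset.sum_congr rfl (fun i _ => ?_)
    rw [reduceE i (Efun r C t t0 m j i), Finset.mul_sum]
    refine Finset.sum_congr rfl (fun a _ => ?_)
    have inner : (∑ β, Hq r Λ t t0 a β * Efun r C t t0 m j i β)
        = (1/(t0:ℚ)) * ∑ b ∈ univ.filter (fun b => t b = 1), (Λ a b : ℚ) * Xf r C t t0 m j i b := by
      rw [Finset.mul_sum, Finset.sum_filter]
      refine Finset.sum_congr rfl (fun β _ => ?_)
      rw [Efun_eq]
      by_cases hβ : t β = 1
      · rw [if_pos hβ, if_pos hβ]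
        unfold Hq
        rw [hβ]
        push_cast
        ring
      · rw [if_neg hβ, if_neg hβ, mul_zero]
    rw [inner]
    ring
  have innerN : ∀ i, 1 ≤ i → i ≤ t0 → ∀ a : Fin r,
      (∑ β, Hq r Λ t t0 a β * mfun r t0 t k n (t0*(j-1)+i) β)
      = ((∑ b ∈ univ.filter (fun b => t b = 1), Hq r Λ t t0 a b * (∑ i' ∈ Icc j k, (n b i' : ℚ)))
          + ∑ b ∈ univ.filter (fun b => t b = t0), (Λ a b : ℚ) * mfun r t0 t k n (t0*j) b)
        + ∑ b ∈ univ.filter (fun b => t b = t0), (Λ a b : ℚ) * fVec r t0 n j i b := by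
    intro i hi1 hi2 a
    rw [sum_partition r t0 t htval ht0 (fun β => Hq r Λ t t0 a β * mfun r t0 t k n (t0*(j-1)+i) β)]
    have hO : ∀ b ∈ univ.filter (fun b : Fin r => t b = 1),
        Hq r Λ t t0 a b * mfun r t0 t k n (t0*(j-1)+i) b
        = Hq r Λ t t0 a b * (∑ i' ∈ Icc j k, (n b i' : ℚ)) := by
      intro b hb
      have hb1 : t b = 1 := (Finset.mem_filter.mp hb).2
      rw [mfun_short r t0 t k n (t0*(j-1)+i) b hb1 j hj1 (by omega) (by omega)]
    have hLb : ∀ b ∈ univ.filter (fun b : Fin r => t b = t0),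
        Hq r Λ t t0 a b * mfun r t0 t k n (t0*(j-1)+i) b
        = (Λ a b : ℚ) * mfun r t0 t k n (t0*j) b + (Λ a b : ℚ) * fVec r t0 n j i b := by
      intro b hb
      have hb1 : t b = t0 := (Finset.mem_filter.mp hb).2
      rw [mfun_fVec r t k t0 n b hb1 ht0pos j i hj1 hj2 hi1 hi2]
      unfold Hq
      rw [hb1]
      field_simp
      ring
    rw [Finset.sum_congr rfl hO, Finset.sum_congr rfl hLb, Finset.sum_add_distrib]
    ring
  have hT3 : ∑ i ∈ Icc 1 t0,
      (∑ α, ∑ β, Efun r C t t0 m j i α * Hq r Λ t t0 α β * mfun r t0 t k n (t0*(j-1)+i) β)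
      = ∑ i ∈ Icc 1 t0, ∑ a ∈ univ.filter (fun a => t a = 1),
          Xf r C t t0 m j i a
            * (∑ b ∈ univ.filter (fun b => t b = t0), (Λ a b : ℚ) * fVec r t0 n j i b) := by
    have key : ∀ i ∈ Icc 1 t0,
        (∑ α, ∑ β, Efun r C t t0 m j i α * Hq r Λ t t0 α β * mfun r t0 t k n (t0*(j-1)+i) β)
        = (∑ a ∈ univ.filter (fun a => t a = 1), Xf r C t t0 m j i a
            * ((∑ b ∈ univ.filter (fun b => t b = 1), Hq r Λ t t0 a b * (∑ i' ∈ Icc j k, (n b i' : ℚ)))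
              + ∑ b ∈ univ.filter (fun b => t b = t0), (Λ a b : ℚ) * mfun r t0 t k n (t0*j) b))
          + ∑ a ∈ univ.filter (fun a => t a = 1), Xf r C t t0 m j i a
            * (∑ b ∈ univ.filter (fun b => t b = t0), (Λ a b : ℚ) * fVec r t0 n j i b) := by
      intro i hi
      simp only [mem_Icc] at hi
      rw [reduceE i (mfun r t0 t k n (t0*(j-1)+i))]
      rw [Finset.sum_congr rfl (fun a (_ : a ∈ univ.filter (fun a : Fin r => t a = 1)) => by
        rw [innerN i hi.1 hi.2 a])]
      rw [← Finset.sum_add_distrib]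
      exact Finset.sum_congr rfl (fun a _ => by ring)
    rw [Finset.sum_congr rfl (fun i hi => by rw [key i hi])]
    rw [Finset.sum_add_distrib]
    rw [kill_const r C t t0 m j (by omega)
      (fun a => ((∑ b ∈ univ.filter (fun b => t b = 1), Hq r Λ t t0 a b * (∑ i' ∈ Icc j k, (n b i' : ℚ)))
              + ∑ b ∈ univ.filter (fun b => t b = t0), (Λ a b : ℚ) * mfun r t0 t k n (t0*j) b))]
    rw [zero_add]
  have hT4 : ∑ i ∈ Icc 1 t0,
      (∑ α, ∑ β, mfun r t0 t k n (t0*(j-1)+i) α * Hq r Λ t t0 α β * Efun r C t t0 m j i β)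
      = ∑ i ∈ Icc 1 t0, ∑ a ∈ univ.filter (fun a => t a = 1),
          Xf r C t t0 m j i a
            * (∑ b ∈ univ.filter (fun b => t b = t0), (Λ a b : ℚ) * fVec r t0 n j i b) := by
    have red : ∀ i : ℕ,
        (∑ α, ∑ β, mfun r t0 t k n (t0*(j-1)+i) α * Hq r Λ t t0 α β * Efun r C t t0 m j i β)
        = ∑ b ∈ univ.filter (fun b => t b = 1), Xf r C t t0 m j i b
            * (∑ α, mfun r t0 t k n (t0*(j-1)+i) α * Hq r Λ t t0 α b) := by
      intro i
      rw [Finset.sum_comm]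
      rw [Finset.sum_filter]
      refine Finset.sum_congr rfl (fun β _ => ?_)
      rw [Efun_eq]
      by_cases hβ : t β = 1
      · rw [if_pos hβ, if_pos hβ, Finset.mul_sum]
        exact Finset.sum_congr rfl (fun α _ => by ring)
      · rw [if_neg hβ, if_neg hβ]
        exact Finset.sum_eq_zero (fun α _ => by rw [mul_zero])
    have innerN2 : ∀ i, 1 ≤ i → i ≤ t0 → ∀ b : Fin r, t b = 1 →
        (∑ α, mfun r t0 t k n (t0*(j-1)+i) α * Hq r Λ t t0 α b)
        = ((∑ a ∈ univ.filter (fun a => t a = 1), (∑ i' ∈ Icc j k, (n a i' : ℚ)) * Hq r Λ t t0 a b)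
            + ∑ a ∈ univ.filter (fun a => t a = t0), (Λ b a : ℚ) * mfun r t0 t k n (t0*j) a)
          + ∑ a ∈ univ.filter (fun a => t a = t0), (Λ b a : ℚ) * fVec r t0 n j i a := by
      intro i hi1 hi2 b hb1
      rw [sum_partition r t0 t htval ht0
        (fun α => mfun r t0 t k n (t0*(j-1)+i) α * Hq r Λ t t0 α b)]
      have hOa : ∀ a ∈ univ.filter (fun a : Fin r => t a = 1),
          mfun r t0 t k n (t0*(j-1)+i) a * Hq r Λ t t0 a b
          = (∑ i' ∈ Icc j k, (n a i' : ℚ)) * Hq r Λ t t0 a b := by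
        intro a ha
        have ha1 : t a = 1 := (Finset.mem_filter.mp ha).2
        rw [mfun_short r t0 t k n (t0*(j-1)+i) a ha1 j hj1 (by omega) (by omega)]
      have hLa : ∀ a ∈ univ.filter (fun a : Fin r => t a = t0),
          mfun r t0 t k n (t0*(j-1)+i) a * Hq r Λ t t0 a b
          = (Λ b a : ℚ) * mfun r t0 t k n (t0*j) a + (Λ b a : ℚ) * fVec r t0 n j i a := by
        intro a ha
        have ha1 : t a = t0 := (Finset.mem_filter.mp ha).2
        have hz : Λ a b = ((t0:ℕ):ℤ) * Λ b a := by
          have hh := hsymΛ a b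
          rw [hb1, ha1] at hh
          simpa using hh
        have hsyq : (Λ a b : ℚ) = (t0:ℚ) * (Λ b a : ℚ) := by exact_mod_cast hz
        rw [mfun_fVec r t k t0 n a ha1 ht0pos j i hj1 hj2 hi1 hi2]
        unfold Hq
        rw [hb1, hsyq]
        push_cast
        field_simp
        ring
      rw [Finset.sum_congr rfl hOa, Finset.sum_congr rfl hLa, Finset.sum_add_distrib]
      ring
    have key : ∀ i ∈ Icc 1 t0,
        (∑ α, ∑ β, mfun r t0 t k n (t0*(j-1)+i) α * Hq r Λ t t0 α β * Efun r C t t0 m j i β)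
        = (∑ b ∈ univ.filter (fun b => t b = 1), Xf r C t t0 m j i b
            * ((∑ a ∈ univ.filter (fun a => t a = 1), (∑ i' ∈ Icc j k, (n a i' : ℚ)) * Hq r Λ t t0 a b)
              + ∑ a ∈ univ.filter (fun a => t a = t0), (Λ b a : ℚ) * mfun r t0 t k n (t0*j) a))
          + ∑ b ∈ univ.filter (fun b => t b = 1), Xf r C t t0 m j i b
            * (∑ a ∈ univ.filter (fun a => t a = t0), (Λ b a : ℚ) * fVec r t0 n j i a) := by
      intro i hi
      simp only [mem_Icc] at hi
      rw [red i]
      rw [Finset.sum_congr rfl (fun b hb => by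
        rw [innerN2 i hi.1 hi.2 b (Finset.mem_filter.mp hb).2])]
      rw [← Finset.sum_add_distrib]
      exact Finset.sum_congr rfl (fun b _ => by ring)
    rw [Finset.sum_congr rfl (fun i hi => by rw [key i hi])]
    rw [Finset.sum_add_distrib]
    rw [kill_const r C t t0 m j (by omega)
      (fun b => ((∑ a ∈ univ.filter (fun a => t a = 1), (∑ i' ∈ Icc j k, (n a i' : ℚ)) * Hq r Λ t t0 a b)
              + ∑ a ∈ univ.filter (fun a => t a = t0), (Λ b a : ℚ) * mfun r t0 t k n (t0*j) a))]
    rw [zero_add]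
  have hU : Uj r C t t0 Λ m n j
      = (1/(t0:ℚ)) * (∑ i ∈ Icc 1 t0, ∑ a ∈ univ.filter (fun a => t a = 1),
          Xf r C t t0 m j i a
            * (∑ b ∈ univ.filter (fun b => t b = 1), (Λ a b : ℚ) * Xf r C t t0 m j i b))
        - 2 * ∑ i ∈ Icc 1 t0, ∑ a ∈ univ.filter (fun a => t a = 1),
            Xf r C t t0 m j i a
              * (∑ b ∈ univ.filter (fun b => t b = t0), (Λ a b : ℚ) * fVec r t0 n j i b) := by
    unfold Uj
    simp only [Xf_def]
    have step : ∀ i : ℕ,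
        (∑ β ∈ univ.filter (fun β => t β = t0),
          eVec r t0 m j i β *
            ∑ a ∈ univ.filter (fun a => t a = 1),
              (C a β : ℚ) *
                ((∑ a' ∈ univ.filter (fun a' => t a' = 1),
                    (Λ a a' : ℚ) * Xf r C t t0 m j i a')
                  - 2 * (t0 : ℚ) * ∑ b' ∈ univ.filter (fun b' => t b' = t0),
                      (Λ a b' : ℚ) * fVec r t0 n j i b'))
        = (∑ a ∈ univ.filter (fun a => t a = 1), Xf r C t t0 m j i a
            * (∑ b ∈ univ.filter (fun b => t b = 1), (Λ a b : ℚ) * Xf r C t t0 m j i b))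
          - 2 * (t0:ℚ) * ∑ a ∈ univ.filter (fun a => t a = 1), Xf r C t t0 m j i a
              * (∑ b ∈ univ.filter (fun b => t b = t0), (Λ a b : ℚ) * fVec r t0 n j i b) := by
      intro i
      rw [swapX r C t t0 m j i
        (fun a => (∑ a' ∈ univ.filter (fun a' => t a' = 1), (Λ a a' : ℚ) * Xf r C t t0 m j i a')
          - 2 * (t0 : ℚ) * ∑ b' ∈ univ.filter (fun b' => t b' = t0),
              (Λ a b' : ℚ) * fVec r t0 n j i b')]
      rw [show (∑ a ∈ univ.filter (fun a => t a = 1), Xf r C t t0 m j i a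
          * ((∑ a' ∈ univ.filter (fun a' => t a' = 1), (Λ a a' : ℚ) * Xf r C t t0 m j i a')
            - 2 * (t0 : ℚ) * ∑ b' ∈ univ.filter (fun b' => t b' = t0),
                (Λ a b' : ℚ) * fVec r t0 n j i b'))
        = ∑ a ∈ univ.filter (fun a => t a = 1),
            (Xf r C t t0 m j i a
                * (∑ b ∈ univ.filter (fun b => t b = 1), (Λ a b : ℚ) * Xf r C t t0 m j i b)
              - 2 * (t0:ℚ) * (Xf r C t t0 m j i a
                * (∑ b ∈ univ.filter (fun b => t b = t0), (Λ a b : ℚ) * fVec r t0 n j i b)))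
        from Finset.sum_congr rfl (fun a _ => by ring)]
      rw [Finset.sum_sub_distrib, ← Finset.mul_sum]
    rw [Finset.sum_congr rfl (fun i (_ : i ∈ Icc 1 t0) => step i)]
    rw [Finset.sum_sub_distrib, ← Finset.mul_sum]
    rw [mul_sub]
    congr 1
    rw [← mul_assoc]
    rw [show (1/(t0:ℚ)) * (2 * (t0:ℚ)) = 2 by field_simp]
  simp only [Finset.sum_sub_distrib, Finset.sum_add_distrib]
  rw [hT1, hT2, hT3, hT4, hU]
  ring


lemma part1diag (r t0 k : ℕ) (t : Fin r → ℕ) (htval : ∀ β, t β = 1 ∨ t β = t0) (ht0 : 0 < t0)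
    (d : Fin r → ℚ) (g h : Fin r → ℕ → ℕ) :
    ∑ u ∈ Icc 1 (t0*k), ∑ γ, d γ * mfun r t0 t k g u γ * mfun r t0 t k h u γ
      = ∑ γ, ∑ i ∈ Icc 1 (t γ * k), ∑ j ∈ Icc 1 (t γ * k),
          d γ * (((t0 / t γ : ℕ):ℚ) * ((min i j : ℕ):ℚ)) * (g γ i : ℚ) * (h γ j : ℚ) := by
  rw [Finset.sum_comm]
  refine Finset.sum_congr rfl (fun γ _ => ?_)
  have expand : ∀ u : ℕ, d γ * mfun r t0 t k g u γ * mfun r t0 t k h u γ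
      = ∑ i ∈ Icc 1 (t γ * k), ∑ j ∈ Icc 1 (t γ * k),
          d γ * (g γ i : ℚ) * (h γ j : ℚ)
            * ((if u ≤ (t0 / t γ) * i then (1:ℚ) else 0) * (if u ≤ (t0 / t γ) * j then (1:ℚ) else 0)) := by
    intro u
    unfold mfun
    rw [mul_assoc, Finset.sum_mul_sum, Finset.mul_sum]
    refine Finset.sum_congr rfl (fun i hi => ?_)
    rw [Finset.mul_sum]
    refine Finset.sum_congr rfl (fun j hj => ?_)
    have hcond : ∀ x : ℕ, (t γ * u ≤ t0 * x) ↔ (u ≤ (t0 / t γ) * x) := by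
      intro x
      rcases htval γ with hh | hh <;> rw [hh]
      · simp only [Nat.div_one, one_mul]
      · rw [Nat.div_self ht0, one_mul]
        exact ⟨fun hc => Nat.le_of_mul_le_mul_left hc ht0, fun hc => Nat.mul_le_mul_left t0 hc⟩
    simp only [hcond]
    split_ifs <;> ring
  rw [Finset.sum_congr rfl (fun u _ => expand u)]
  rw [Finset.sum_comm]
  refine Finset.sum_congr rfl (fun i hi => ?_)
  rw [Finset.sum_comm]
  refine Finset.sum_congr rfl (fun j hj => ?_)
  rw [← Finset.mul_sum]
  simp only [mem_Icc] at hi hj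
  have hle : ∀ x : ℕ, 1 ≤ x → x ≤ t γ * k → (t0 / t γ) * x ≤ t0 * k := by
    intro x h1 h2
    rcases htval γ with hh | hh <;> rw [hh] at h2 ⊢
    · simp only [Nat.div_one]
      exact Nat.mul_le_mul_left t0 (by omega)
    · rw [Nat.div_self ht0, one_mul]; omega
  rw [count_min (t0*k) ((t0 / t γ) * i) ((t0 / t γ) * j) (hle i hi.1 hi.2) (hle j hj.1 hj.2)]
  have hmin : ((min ((t0 / t γ) * i) ((t0 / t γ) * j) : ℕ):ℚ)
      = ((t0 / t γ : ℕ):ℚ) * ((min i j : ℕ):ℚ) := by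
    rcases Nat.le_total i j with hij | hij
    · rw [min_eq_left (Nat.mul_le_mul_left (t0 / t γ) hij), min_eq_left hij]
      push_cast; ring
    · rw [min_eq_right (Nat.mul_le_mul_left (t0 / t γ) hij), min_eq_right hij]
      push_cast; ring
  rw [hmin]
  ring

lemma Fterm (r : ℕ) (C Λ : Fin r → Fin r → ℤ) (t : Fin r → ℕ) (k t0 : ℕ) (δ : ℤ)
    (m n : Fin r → ℕ → ℕ)
    (htpos : ∀ α, 0 < t α)
    (htval : ∀ β, t β = 1 ∨ t β = t0) (ht0 : 1 < t0) :
    ∑ u ∈ Icc 1 (t0*k),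
      ((∑ γ, ∑ γ', ((δ:ℚ) * (t γ:ℚ)/(t0:ℚ)) * Cq r C t γ γ'
            * mfun r t0 t k m u γ * mfun r t0 t k m u γ')
        - 2 * (∑ γ, ((δ:ℚ) * (t γ:ℚ)/(t0:ℚ)) * mfun r t0 t k m u γ * mfun r t0 t k n u γ)
        + (∑ γ, ∑ γ', Hq r Λ t t0 γ γ' * mfun r t0 t k n u γ * mfun r t0 t k n u γ'))
      = 2*(δ:ℚ) * Qk r C t k m n + Lk r t Λ k n := by
  have ht0pos : 0 < t0 := by omega
  have ht0q : ((t0:ℚ)) ≠ 0 := by positivity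
  rw [Finset.sum_add_distrib, Finset.sum_sub_distrib, ← Finset.mul_sum]
  have piece1 : ∑ u ∈ Icc 1 (t0*k), ∑ γ, ∑ γ', ((δ:ℚ) * (t γ:ℚ)/(t0:ℚ)) * Cq r C t γ γ'
        * mfun r t0 t k m u γ * mfun r t0 t k m u γ'
      = (δ:ℚ) * ∑ α, ∑ β, ∑ i ∈ Icc 1 (t α * k), ∑ j ∈ Icc 1 (t β * k),
          (C α β : ℚ) / (t α : ℚ) * ((min (t α * j) (t β * i) : ℕ) : ℚ)
            * (m α i : ℚ) * (m β j : ℚ) := by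
    have h := part1 r t0 k t htval ht0pos
      (fun γ γ' => ((δ:ℚ) * (t γ:ℚ)/(t0:ℚ)) * Cq r C t γ γ') m m
    rw [h]
    rw [Finset.mul_sum]
    refine Finset.sum_congr rfl (fun α _ => ?_)
    rw [Finset.mul_sum]
    refine Finset.sum_congr rfl (fun β _ => ?_)
    rw [Finset.mul_sum]
    refine Finset.sum_congr rfl (fun i _ => ?_)
    rw [Finset.mul_sum]
    refine Finset.sum_congr rfl (fun j _ => ?_)
    unfold Cq
    have h1 : ((t α : ℚ)) ≠ 0 := Nat.cast_ne_zero.mpr (htpos α).ne'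
    have h2 : ((t β : ℚ)) ≠ 0 := Nat.cast_ne_zero.mpr (htpos β).ne'
    field_simp
  have piece2 : ∑ u ∈ Icc 1 (t0*k), ∑ γ, ((δ:ℚ) * (t γ:ℚ)/(t0:ℚ))
        * mfun r t0 t k m u γ * mfun r t0 t k n u γ
      = (δ:ℚ) * ∑ α, ∑ i ∈ Icc 1 (t α * k), ∑ j ∈ Icc 1 (t α * k),
          ((min i j : ℕ) : ℚ) * (m α i : ℚ) * (n α j : ℚ) := by
    have h := part1diag r t0 k t htval ht0pos (fun γ => ((δ:ℚ) * (t γ:ℚ)/(t0:ℚ))) m n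
    rw [h]
    rw [Finset.mul_sum]
    refine Finset.sum_congr rfl (fun α _ => ?_)
    rw [Finset.mul_sum]
    refine Finset.sum_congr rfl (fun i _ => ?_)
    rw [Finset.mul_sum]
    refine Finset.sum_congr rfl (fun j _ => ?_)
    rcases htval α with hh | hh <;> rw [hh]
    · rw [Nat.div_one]
      push_cast
      field_simp
    · rw [Nat.div_self ht0pos]
      push_cast
      field_simp
  have piece3 : ∑ u ∈ Icc 1 (t0*k), ∑ γ, ∑ γ', Hq r Λ t t0 γ γ'
        * mfun r t0 t k n u γ * mfun r t0 t k n u γ'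
      = Lk r t Λ k n := by
    have h := part1 r t0 k t htval ht0pos (fun γ γ' => Hq r Λ t t0 γ γ') n n
    rw [h]
    unfold Lk
    refine Finset.sum_congr rfl (fun α _ => ?_)
    refine Finset.sum_congr rfl (fun β _ => ?_)
    refine Finset.sum_congr rfl (fun i _ => ?_)
    refine Finset.sum_congr rfl (fun j _ => ?_)
    unfold Hq
    have h1 : ((t α : ℚ)) ≠ 0 := Nat.cast_ne_zero.mpr (htpos α).ne'
    have h2 : ((t β : ℚ)) ≠ 0 := Nat.cast_ne_zero.mpr (htpos β).ne'
    field_simp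
  rw [piece1, piece2, piece3]
  unfold Qk
  ring


lemma Central (r : ℕ) (C Λ : Fin r → Fin r → ℤ) (t : Fin r → ℕ) (k t0 : ℕ) (ℓ : Fin r → ℕ)
    (m n : Fin r → ℕ → ℕ)
    (htval : ∀ β, t β = 1 ∨ t β = t0) (ht0 : 1 < t0)
    (hsymΛ : ∀ a b, (t b : ℤ) * Λ a b = (t a : ℤ) * Λ b a)
    (j i : ℕ) :
    ∑ α, ∑ β, (if t α = 1 then qmod r C t k ℓ m n α (j-1) - qmod r C t k ℓ m n α j
        else qmod r C t k ℓ m n α (t0*(j-1)+i-1) - qmod r C t k ℓ m n α (t0*(j-1)+i))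
      * Hq r Λ t t0 α β
      * (if t β = 1 then qmod r C t k ℓ m n β (j-1) - qmod r C t k ℓ m n β j
        else qmod r C t k ℓ m n β (t0*(j-1)+i-1) - qmod r C t k ℓ m n β (t0*(j-1)+i))
    = (1/(t0:ℚ)) * (∑ a ∈ univ.filter (fun a => t a = 1), ∑ b ∈ univ.filter (fun b => t b = 1),
          (qmod r C t k ℓ m n a (j-1) - qmod r C t k ℓ m n a j) * (Λ a b : ℚ)
            * (qmod r C t k ℓ m n b (j-1) - qmod r C t k ℓ m n b j))
      + 2 * (∑ a ∈ univ.filter (fun a => t a = 1), ∑ b ∈ univ.filter (fun b => t b = t0),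
          (qmod r C t k ℓ m n a (j-1) - qmod r C t k ℓ m n a j) * (Λ a b : ℚ)
            * (qmod r C t k ℓ m n b (t0*(j-1)+i-1) - qmod r C t k ℓ m n b (t0*(j-1)+i)))
      + (∑ a ∈ univ.filter (fun a => t a = t0), ∑ b ∈ univ.filter (fun b => t b = t0),
          (qmod r C t k ℓ m n a (t0*(j-1)+i-1) - qmod r C t k ℓ m n a (t0*(j-1)+i)) * (Λ a b : ℚ)
            * (qmod r C t k ℓ m n b (t0*(j-1)+i-1) - qmod r C t k ℓ m n b (t0*(j-1)+i))) := by
  have ht0q : ((t0:ℚ)) ≠ 0 := by positivity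
  have htne : ∀ x : Fin r, t x = t0 → ¬ (t x = 1) := by intro x hx; omega
  rw [sum_partition r t0 t htval ht0]
  rw [Finset.sum_congr rfl (fun a (ha : a ∈ univ.filter (fun a : Fin r => t a = 1)) =>
    sum_partition r t0 t htval ht0 _)]
  rw [Finset.sum_congr rfl (fun a (ha : a ∈ univ.filter (fun a : Fin r => t a = t0)) =>
    sum_partition r t0 t htval ht0 _)]
  rw [Finset.sum_add_distrib, Finset.sum_add_distrib]
  have cB1 : ∑ a ∈ univ.filter (fun a : Fin r => t a = 1), ∑ b ∈ univ.filter (fun b : Fin r => t b = 1),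
      (if t a = 1 then qmod r C t k ℓ m n a (j-1) - qmod r C t k ℓ m n a j
        else qmod r C t k ℓ m n a (t0*(j-1)+i-1) - qmod r C t k ℓ m n a (t0*(j-1)+i))
      * Hq r Λ t t0 a b
      * (if t b = 1 then qmod r C t k ℓ m n b (j-1) - qmod r C t k ℓ m n b j
        else qmod r C t k ℓ m n b (t0*(j-1)+i-1) - qmod r C t k ℓ m n b (t0*(j-1)+i))
      = (1/(t0:ℚ)) * (∑ a ∈ univ.filter (fun a => t a = 1), ∑ b ∈ univ.filter (fun b => t b = 1),
          (qmod r C t k ℓ m n a (j-1) - qmod r C t k ℓ m n a j) * (Λ a b : ℚ)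
            * (qmod r C t k ℓ m n b (j-1) - qmod r C t k ℓ m n b j)) := by
    rw [Finset.mul_sum]
    refine Finset.sum_congr rfl (fun a ha => ?_)
    rw [Finset.mul_sum]
    refine Finset.sum_congr rfl (fun b hb => ?_)
    have ha1 : t a = 1 := (Finset.mem_filter.mp ha).2
    have hb1 : t b = 1 := (Finset.mem_filter.mp hb).2
    rw [if_pos ha1, if_pos hb1]
    unfold Hq
    rw [hb1]
    push_cast
    ring
  have cB2 : ∑ a ∈ univ.filter (fun a : Fin r => t a = 1), ∑ b ∈ univ.filter (fun b : Fin r => t b = t0),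
      (if t a = 1 then qmod r C t k ℓ m n a (j-1) - qmod r C t k ℓ m n a j
        else qmod r C t k ℓ m n a (t0*(j-1)+i-1) - qmod r C t k ℓ m n a (t0*(j-1)+i))
      * Hq r Λ t t0 a b
      * (if t b = 1 then qmod r C t k ℓ m n b (j-1) - qmod r C t k ℓ m n b j
        else qmod r C t k ℓ m n b (t0*(j-1)+i-1) - qmod r C t k ℓ m n b (t0*(j-1)+i))
      = ∑ a ∈ univ.filter (fun a => t a = 1), ∑ b ∈ univ.filter (fun b => t b = t0),
          (qmod r C t k ℓ m n a (j-1) - qmod r C t k ℓ m n a j) * (Λ a b : ℚ)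
            * (qmod r C t k ℓ m n b (t0*(j-1)+i-1) - qmod r C t k ℓ m n b (t0*(j-1)+i)) := by
    refine Finset.sum_congr rfl (fun a ha => ?_)
    refine Finset.sum_congr rfl (fun b hb => ?_)
    have ha1 : t a = 1 := (Finset.mem_filter.mp ha).2
    have hb1 : t b = t0 := (Finset.mem_filter.mp hb).2
    rw [if_pos ha1, if_neg (htne b hb1)]
    unfold Hq
    rw [hb1]
    field_simp
    try ring
  have cB3 : ∑ a ∈ univ.filter (fun a : Fin r => t a = t0), ∑ b ∈ univ.filter (fun b : Fin r => t b = 1),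
      (if t a = 1 then qmod r C t k ℓ m n a (j-1) - qmod r C t k ℓ m n a j
        else qmod r C t k ℓ m n a (t0*(j-1)+i-1) - qmod r C t k ℓ m n a (t0*(j-1)+i))
      * Hq r Λ t t0 a b
      * (if t b = 1 then qmod r C t k ℓ m n b (j-1) - qmod r C t k ℓ m n b j
        else qmod r C t k ℓ m n b (t0*(j-1)+i-1) - qmod r C t k ℓ m n b (t0*(j-1)+i))
      = ∑ a ∈ univ.filter (fun a => t a = 1), ∑ b ∈ univ.filter (fun b => t b = t0),
          (qmod r C t k ℓ m n a (j-1) - qmod r C t k ℓ m n a j) * (Λ a b : ℚ)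
            * (qmod r C t k ℓ m n b (t0*(j-1)+i-1) - qmod r C t k ℓ m n b (t0*(j-1)+i)) := by
    rw [Finset.sum_comm]
    refine Finset.sum_congr rfl (fun b hb => ?_)
    refine Finset.sum_congr rfl (fun a ha => ?_)
    have ha1 : t a = t0 := (Finset.mem_filter.mp ha).2
    have hb1 : t b = 1 := (Finset.mem_filter.mp hb).2
    rw [if_neg (htne a ha1), if_pos hb1]
    have hz : Λ a b = ((t0:ℕ):ℤ) * Λ b a := by
      have hh := hsymΛ a b
      rw [hb1, ha1] at hh
      simpa using hh
    have hsyq : (Λ a b : ℚ) = (t0:ℚ) * (Λ b a : ℚ) := by exact_mod_cast hz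
    unfold Hq
    rw [hb1, hsyq]
    push_cast
    field_simp
  have cB4 : ∑ a ∈ univ.filter (fun a : Fin r => t a = t0), ∑ b ∈ univ.filter (fun b : Fin r => t b = t0),
      (if t a = 1 then qmod r C t k ℓ m n a (j-1) - qmod r C t k ℓ m n a j
        else qmod r C t k ℓ m n a (t0*(j-1)+i-1) - qmod r C t k ℓ m n a (t0*(j-1)+i))
      * Hq r Λ t t0 a b
      * (if t b = 1 then qmod r C t k ℓ m n b (j-1) - qmod r C t k ℓ m n b j
        else qmod r C t k ℓ m n b (t0*(j-1)+i-1) - qmod r C t k ℓ m n b (t0*(j-1)+i))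
      = ∑ a ∈ univ.filter (fun a => t a = t0), ∑ b ∈ univ.filter (fun b => t b = t0),
          (qmod r C t k ℓ m n a (t0*(j-1)+i-1) - qmod r C t k ℓ m n a (t0*(j-1)+i)) * (Λ a b : ℚ)
            * (qmod r C t k ℓ m n b (t0*(j-1)+i-1) - qmod r C t k ℓ m n b (t0*(j-1)+i)) := by
    refine Finset.sum_congr rfl (fun a ha => ?_)
    refine Finset.sum_congr rfl (fun b hb => ?_)
    have ha1 : t a = t0 := (Finset.mem_filter.mp ha).2
    have hb1 : t b = t0 := (Finset.mem_filter.mp hb).2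
    rw [if_neg (htne a ha1), if_neg (htne b hb1)]
    unfold Hq
    rw [hb1]
    field_simp
    try ring
  rw [cB1, cB2, cB3, cB4]
  ring

/-- Lemma 4.2 of the paper: the restricted quadratic form `Q_k(m,n)` expressed through
the modified vacancy numbers, for non-simply laced Cartan data. -/
theorem Qk_eq_modified_vacancy_form
    (r : ℕ) (C : Fin r → Fin r → ℤ) (t : Fin r → ℕ)
    (hdiag : ∀ α, C α α = 2)
    (hoff : ∀ α β, α ≠ β → C α β ≤ 0)
    (hzero : ∀ α β, C α β = 0 ↔ C β α = 0)
    (htpos : ∀ α, 0 < t α)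
    (htone : ∃ α, t α = 1)
    (hsym : ∀ α β, (t β : ℤ) * C α β = (t α : ℤ) * C β α)
    (hposdef : ∀ v : Fin r → ℚ, v ≠ 0 →
      0 < ∑ α, ∑ β, v α * ((C α β : ℚ) / (t α : ℚ)) * v β)
    (hconn : (SimpleGraph.fromRel fun α β => C α β ≠ 0).Connected)
    (t0 : ℕ) (ht0 : 1 < t0) (htval : ∀ α, t α = 1 ∨ t α = t0) (ht0ex : ∃ α, t α = t0)
    (δ : ℤ) (hδdet : δ = Matrix.det (Matrix.of fun a b => C a b)) (hδpos : 0 < δ)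
    (Λ : Fin r → Fin r → ℤ)
    (hCΛ : ∀ a b, ∑ ω, C a ω * Λ ω b = if a = b then δ else 0)
    (hΛC : ∀ a b, ∑ ω, Λ a ω * C ω b = if a = b then δ else 0)
    (k : ℕ) (hk : 0 < k) (ℓ : Fin r → ℕ) (m n : Fin r → ℕ → ℕ) :
    Qk r C t k m n = (1 / (2 * (δ : ℚ))) *
      ((∑ j ∈ Icc 1 k,
          ((∑ a ∈ univ.filter (fun a => t a = 1), ∑ b ∈ univ.filter (fun b => t b = 1),
              (qmod r C t k ℓ m n a (j - 1) - qmod r C t k ℓ m n a j) * (Λ a b : ℚ)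
                * (qmod r C t k ℓ m n b (j - 1) - qmod r C t k ℓ m n b j))
            + 2 * ∑ a ∈ univ.filter (fun a => t a = 1), ∑ b ∈ univ.filter (fun b => t b = t0),
                (qmod r C t k ℓ m n a (j - 1) - qmod r C t k ℓ m n a j) * (Λ a b : ℚ)
                  * (qmod r C t k ℓ m n b (t0 * (j - 1)) - qmod r C t k ℓ m n b (t0 * j))))
        + (∑ j ∈ Icc 1 (t0 * k),
            ∑ a ∈ univ.filter (fun a => t a = t0), ∑ b ∈ univ.filter (fun b => t b = t0),
              (qmod r C t k ℓ m n a (j - 1) - qmod r C t k ℓ m n a j) * (Λ a b : ℚ)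
                * (qmod r C t k ℓ m n b (j - 1) - qmod r C t k ℓ m n b j))
        - Lk r t Λ k n - ∑ j ∈ Icc 1 k, Uj r C t t0 Λ m n j) := by
  have ht0pos : 0 < t0 := by omega
  have ht0q : ((t0:ℚ)) ≠ 0 := by positivity
  have hδne : δ ≠ 0 := hδpos.ne'
  have hδq : ((δ:ℚ)) ≠ 0 := Int.cast_ne_zero.mpr hδne
  have hsymΛ := lam_symm r C Λ t δ hδne hsym hCΛ hΛC
  have hN : ∀ j : ℕ, 1 ≤ j → t0*(j-1) + t0 = t0 * j := by
    intro j hj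
    have h : j - 1 + 1 = j := by omega
    calc t0*(j-1) + t0 = t0 * ((j-1)+1) := by ring
    _ = t0 * j := by rw [h]
  -- step 1: the common double sum equals the theorem's bracket quadratic part
  have hA : ∀ j ∈ Icc 1 k, (∑ i ∈ Icc 1 t0, (∑ α, ∑ β, (if t α = 1 then qmod r C t k ℓ m n α (j-1) - qmod r C t k ℓ m n α j else qmod r C t k ℓ m n α (t0*(j-1)+i-1) - qmod r C t k ℓ m n α (t0*(j-1)+i)) * Hq r Λ t t0 α β * (if t β = 1 then qmod r C t k ℓ m n β (j-1) - qmod r C t k ℓ m n β j else qmod r C t k ℓ m n β (t0*(j-1)+i-1) - qmod r C t k ℓ m n β (t0*(j-1)+i))))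
      = ((∑ a ∈ univ.filter (fun a => t a = 1), ∑ b ∈ univ.filter (fun b => t b = 1), (qmod r C t k ℓ m n a (j - 1) - qmod r C t k ℓ m n a j) * (Λ a b : ℚ) * (qmod r C t k ℓ m n b (j - 1) - qmod r C t k ℓ m n b j)) + 2 * ∑ a ∈ univ.filter (fun a => t a = 1), ∑ b ∈ univ.filter (fun b => t b = t0), (qmod r C t k ℓ m n a (j - 1) - qmod r C t k ℓ m n a j) * (Λ a b : ℚ) * (qmod r C t k ℓ m n b (t0 * (j - 1)) - qmod r C t k ℓ m n b (t0 * j))) + ∑ i ∈ Icc 1 t0, (∑ a ∈ univ.filter (fun a => t a = t0), ∑ b ∈ univ.filter (fun b => t b = t0), (qmod r C t k ℓ m n a (t0*(j-1)+i-1) - qmod r C t k ℓ m n a (t0*(j-1)+i)) * (Λ a b : ℚ) * (qmod r C t k ℓ m n b (t0*(j-1)+i-1) - qmod r C t k ℓ m n b (t0*(j-1)+i))) := by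
    intro j hj
    simp only [mem_Icc] at hj
    rw [Finset.sum_congr rfl (fun i (_ : i ∈ Icc 1 t0) =>
      Central r C Λ t k t0 ℓ m n htval ht0 hsymΛ j i)]
    rw [show (∑ i ∈ Icc 1 t0, ((1/(t0:ℚ)) * (∑ a ∈ univ.filter (fun a => t a = 1), ∑ b ∈ univ.filter (fun b => t b = 1), (qmod r C t k ℓ m n a (j - 1) - qmod r C t k ℓ m n a j) * (Λ a b : ℚ) * (qmod r C t k ℓ m n b (j - 1) - qmod r C t k ℓ m n b j)) + 2 * (∑ a ∈ univ.filter (fun a => t a = 1), ∑ b ∈ univ.filter (fun b => t b = t0), (qmod r C t k ℓ m n a (j-1) - qmod r C t k ℓ m n a j) * (Λ a b : ℚ) * (qmod r C t k ℓ m n b (t0*(j-1)+i-1) - qmod r C t k ℓ m n b (t0*(j-1)+i))) + (∑ a ∈ univ.filter (fun a => t a = t0), ∑ b ∈ univ.filter (fun b => t b = t0), (qmod r C t k ℓ m n a (t0*(j-1)+i-1) - qmod r C t k ℓ m n a (t0*(j-1)+i)) * (Λ a b : ℚ) * (qmod r C t k ℓ m n b (t0*(j-1)+i-1) - qmod r C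 t k ℓ m n b (t0*(j-1)+i)))))
        = (∑ i ∈ Icc 1 t0, ((1/(t0:ℚ)) * (∑ a ∈ univ.filter (fun a => t a = 1), ∑ b ∈ univ.filter (fun b => t b = 1), (qmod r C t k ℓ m n a (j - 1) - qmod r C t k ℓ m n a j) * (Λ a b : ℚ) * (qmod r C t k ℓ m n b (j - 1) - qmod r C t k ℓ m n b j)) + 2 * (∑ a ∈ univ.filter (fun a => t a = 1), ∑ b ∈ univ.filter (fun b => t b = t0), (qmod r C t k ℓ m n a (j-1) - qmod r C t k ℓ m n a j) * (Λ a b : ℚ) * (qmod r C t k ℓ m n b (t0*(j-1)+i-1) - qmod r C t k ℓ m n b (t0*(j-1)+i))))) + ∑ i ∈ Icc 1 t0, (∑ a ∈ univ.filter (fun a => t a = t0), ∑ b ∈ univ.filter (fun b => t b = t0), (qmod r C t k ℓ m n a (t0*(j-1)+i-1) - qmod r C t k ℓ m n a (t0*(j-1)+i)) * (Λ a b : ℚ) * (qmod r C t k ℓ m n b (t0*(j-1)+i-1) - qmod r C t k ℓ m n b (t0*(j-1)+i)))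
      from Finset.sum_add_distrib]
    congr 1
    rw [show (∑ i ∈ Icc 1 t0, ((1/(t0:ℚ)) * (∑ a ∈ univ.filter (fun a => t a = 1), ∑ b ∈ univ.filter (fun b => t b = 1), (qmod r C t k ℓ m n a (j - 1) - qmod r C t k ℓ m n a j) * (Λ a b : ℚ) * (qmod r C t k ℓ m n b (j - 1) - qmod r C t k ℓ m n b j)) + 2 * (∑ a ∈ univ.filter (fun a => t a = 1), ∑ b ∈ univ.filter (fun b => t b = t0), (qmod r C t k ℓ m n a (j-1) - qmod r C t k ℓ m n a j) * (Λ a b : ℚ) * (qmod r C t k ℓ m n b (t0*(j-1)+i-1) - qmod r C t k ℓ m n b (t0*(j-1)+i)))))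
        = (∑ i ∈ Icc 1 t0, ((1/(t0:ℚ)) * (∑ a ∈ univ.filter (fun a => t a = 1), ∑ b ∈ univ.filter (fun b => t b = 1), (qmod r C t k ℓ m n a (j - 1) - qmod r C t k ℓ m n a j) * (Λ a b : ℚ) * (qmod r C t k ℓ m n b (j - 1) - qmod r C t k ℓ m n b j)))) + ∑ i ∈ Icc 1 t0, (2 * (∑ a ∈ univ.filter (fun a => t a = 1), ∑ b ∈ univ.filter (fun b => t b = t0), (qmod r C t k ℓ m n a (j-1) - qmod r C t k ℓ m n a j) * (Λ a b : ℚ) * (qmod r C t k ℓ m n b (t0*(j-1)+i-1) - qmod r C t k ℓ m n b (t0*(j-1)+i))))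
      from Finset.sum_add_distrib]
    congr 1
    · rw [Finset.sum_const, Nat.card_Icc, show t0 + 1 - 1 = t0 from rfl, nsmul_eq_mul]
      rw [← mul_assoc]
      rw [show (t0:ℚ) * (1/(t0:ℚ)) = 1 by field_simp]
      rw [one_mul]
    · rw [← Finset.mul_sum]
      congr 1
      rw [Finset.sum_comm]
      refine Finset.sum_congr rfl (fun a _ => ?_)
      rw [Finset.sum_comm]
      refine Finset.sum_congr rfl (fun b _ => ?_)
      rw [← Finset.mul_sum]
      rw [show (∑ i ∈ Icc 1 t0, (qmod r C t k ℓ m n b (t0*(j-1)+i-1) - qmod r C t k ℓ m n b (t0*(j-1)+i)))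
          = qmod r C t k ℓ m n b (t0*(j-1)) - qmod r C t k ℓ m n b (t0*(j-1)+t0)
        from telescope (fun x => qmod r C t k ℓ m n b x) (t0*(j-1)) t0]
      rw [hN j hj.1]
  have hsum1 : (∑ j ∈ Icc 1 k, ∑ i ∈ Icc 1 t0, (∑ α, ∑ β, (if t α = 1 then qmod r C t k ℓ m n α (j-1) - qmod r C t k ℓ m n α j else qmod r C t k ℓ m n α (t0*(j-1)+i-1) - qmod r C t k ℓ m n α (t0*(j-1)+i)) * Hq r Λ t t0 α β * (if t β = 1 then qmod r C t k ℓ m n β (j-1) - qmod r C t k ℓ m n β j else qmod r C t k ℓ m n β (t0*(j-1)+i-1) - qmod r C t k ℓ m n β (t0*(j-1)+i)))) = (∑ j ∈ Icc 1 k, ((∑ a ∈ univ.filter (fun a => t a = 1), ∑ b ∈ univ.filter (fun b => t b = 1), (qmod r C t k ℓ m n a (j - 1) - qmod r C t k ℓ m n a j) * (Λ a b : ℚ) * (qmod r C t k ℓ m n b (j - 1) - qmod r C t k ℓ m n b j)) + 2 * ∑ a ∈ univ.filter (fun a => t a = 1), ∑ b ∈ univ.filter (fun b => t b = t0), (qmod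 r C t k ℓ m n a (j - 1) - qmod r C t k ℓ m n a j) * (Λ a b : ℚ) * (qmod r C t k ℓ m n b (t0 * (j - 1)) - qmod r C t k ℓ m n b (t0 * j)))) + (∑ j ∈ Icc 1 (t0 * k), ∑ a ∈ univ.filter (fun a => t a = t0), ∑ b ∈ univ.filter (fun b => t b = t0), (qmod r C t k ℓ m n a (j-1) - qmod r C t k ℓ m n a j) * (Λ a b : ℚ) * (qmod r C t k ℓ m n b (j-1) - qmod r C t k ℓ m n b j)) := by
    rw [Finset.sum_congr rfl hA]
    rw [show (∑ j ∈ Icc 1 k, (((∑ a ∈ univ.filter (fun a => t a = 1), ∑ b ∈ univ.filter (fun b => t b = 1), (qmod r C t k ℓ m n a (j - 1) - qmod r C t k ℓ m n a j) * (Λ a b : ℚ) * (qmod r C t k ℓ m n b (j - 1) - qmod r C t k ℓ m n b j)) + 2 * ∑ a ∈ univ.filter (fun a => t a = 1), ∑ b ∈ univ.filter (fun b => t b = t0), (qmod r C t k ℓ m n a (j - 1) - qmod r C t k ℓ m n a j) * (Λ a b : ℚ) * (qmod r C t k ℓ m n b (t0 * (j - 1)) - qmod r C t k ℓ m n b (t0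 * j))) + ∑ i ∈ Icc 1 t0, (∑ a ∈ univ.filter (fun a => t a = t0), ∑ b ∈ univ.filter (fun b => t b = t0), (qmod r C t k ℓ m n a (t0*(j-1)+i-1) - qmod r C t k ℓ m n a (t0*(j-1)+i)) * (Λ a b : ℚ) * (qmod r C t k ℓ m n b (t0*(j-1)+i-1) - qmod r C t k ℓ m n b (t0*(j-1)+i)))))
        = (∑ j ∈ Icc 1 k, ((∑ a ∈ univ.filter (fun a => t a = 1), ∑ b ∈ univ.filter (fun b => t b = 1), (qmod r C t k ℓ m n a (j - 1) - qmod r C t k ℓ m n a j) * (Λ a b : ℚ) * (qmod r C t k ℓ m n b (j - 1) - qmod r C t k ℓ m n b j)) + 2 * ∑ a ∈ univ.filter (fun a => t a = 1), ∑ b ∈ univ.filter (fun b => t b = t0), (qmod r C t k ℓ m n a (j - 1) - qmod r C t k ℓ m n a j) * (Λ a b : ℚ) * (qmod r C t k ℓ m n b (t0 * (j - 1)) - qmod r C t k ℓ m n b (t0 * j)))) + ∑ j ∈ Icc 1 k, ∑ i ∈ Icc 1 t0, (∑ a ∈ univ.filter (fun a => t a = t0), ∑ b ∈ univ.filter (fun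 b => t b = t0), (qmod r C t k ℓ m n a (t0*(j-1)+i-1) - qmod r C t k ℓ m n a (t0*(j-1)+i)) * (Λ a b : ℚ) * (qmod r C t k ℓ m n b (t0*(j-1)+i-1) - qmod r C t k ℓ m n b (t0*(j-1)+i)))
      from Finset.sum_add_distrib]
    congr 1
    exact (sum_blocks t0 k (fun u => ∑ a ∈ univ.filter (fun a => t a = t0), ∑ b ∈ univ.filter (fun b => t b = t0), (qmod r C t k ℓ m n a (u-1) - qmod r C t k ℓ m n a u) * (Λ a b : ℚ) * (qmod r C t k ℓ m n b (u-1) - qmod r C t k ℓ m n b u))).symm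
  -- step 2: the common double sum equals main part + U-terms
  have hB : ∀ j ∈ Icc 1 k, ∀ i ∈ Icc 1 t0, (∑ α, ∑ β, (if t α = 1 then qmod r C t k ℓ m n α (j-1) - qmod r C t k ℓ m n α j else qmod r C t k ℓ m n α (t0*(j-1)+i-1) - qmod r C t k ℓ m n α (t0*(j-1)+i)) * Hq r Λ t t0 α β * (if t β = 1 then qmod r C t k ℓ m n β (j-1) - qmod r C t k ℓ m n β j else qmod r C t k ℓ m n β (t0*(j-1)+i-1) - qmod r C t k ℓ m n β (t0*(j-1)+i))) = ((∑ γ, ∑ γ', ((δ:ℚ) * (t γ:ℚ)/(t0:ℚ)) * Cq r C t γ γ' * mfun r t0 t k m (t0*(j-1)+i) γ * mfun r t0 t k m (t0*(j-1)+i) γ') - 2 * (∑ γ, ((δ:ℚ) * (t γ:ℚ)/(t0:ℚ)) * mfun r t0 t k m (t0*(j-1)+i) γ * mfun r t0 t k n (t0*(j-1)+i) γ) + (∑ γ, ∑ γ', Hq r Λ t t0 γ γ' * mfun r t0 t k n (t0*(j-1)+i) γ * mfun r t0 t k n (t0*(j-1)+i) γ')) + ( 2*(∑ γ, ((δ:ℚ)*(t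 γ:ℚ)/(t0:ℚ)) * mfun r t0 t k m (t0*(j-1)+i) γ * Efun r C t t0 m j i γ) + (∑ α, ∑ β, Efun r C t t0 m j i α * Hq r Λ t t0 α β * Efun r C t t0 m j i β) - (∑ α, ∑ β, Efun r C t t0 m j i α * Hq r Λ t t0 α β * mfun r t0 t k n (t0*(j-1)+i) β) - (∑ α, ∑ β, mfun r t0 t k n (t0*(j-1)+i) α * Hq r Λ t t0 α β * Efun r C t t0 m j i β)) := by
    intro j hj i hi
    simp only [mem_Icc] at hj hi
    exact Adecomp r C Λ t k t0 ℓ δ m n htpos htval ht0 hsym hCΛ hΛC j i hj.1 hj.2 hi.1 hi.2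
  have hsum2 : (∑ j ∈ Icc 1 k, ∑ i ∈ Icc 1 t0, (∑ α, ∑ β, (if t α = 1 then qmod r C t k ℓ m n α (j-1) - qmod r C t k ℓ m n α j else qmod r C t k ℓ m n α (t0*(j-1)+i-1) - qmod r C t k ℓ m n α (t0*(j-1)+i)) * Hq r Λ t t0 α β * (if t β = 1 then qmod r C t k ℓ m n β (j-1) - qmod r C t k ℓ m n β j else qmod r C t k ℓ m n β (t0*(j-1)+i-1) - qmod r C t k ℓ m n β (t0*(j-1)+i)))) = (2*(δ:ℚ) * Qk r C t k m n + Lk r t Λ k n)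
      + ∑ j ∈ Icc 1 k, Uj r C t t0 Λ m n j := by
    rw [Finset.sum_congr rfl (fun j hj => Finset.sum_congr rfl (fun i hi => hB j hj i hi))]
    rw [Finset.sum_congr rfl (fun j (_ : j ∈ Icc 1 k) =>
      (Finset.sum_add_distrib : (∑ i ∈ Icc 1 t0, (((∑ γ, ∑ γ', ((δ:ℚ) * (t γ:ℚ)/(t0:ℚ)) * Cq r C t γ γ' * mfun r t0 t k m (t0*(j-1)+i) γ * mfun r t0 t k m (t0*(j-1)+i) γ') - 2 * (∑ γ, ((δ:ℚ) * (t γ:ℚ)/(t0:ℚ)) * mfun r t0 t k m (t0*(j-1)+i) γ * mfun r t0 t k n (t0*(j-1)+i) γ) + (∑ γ, ∑ γ', Hq r Λ t t0 γ γ' * mfun r t0 t k n (t0*(j-1)+i) γ * mfun r t0 t k n (t0*(j-1)+i) γ')) + ( 2*(∑ γ, ((δ:ℚ)*(t γ:ℚ)/(t0:ℚ)) * mfun r t0 t k m (t0*(j-1)+i) γ * Efun r C t t0 m j i γ) + (∑ α, ∑ β, Efun r C t t0 m j i α * Hq r Λ t t0 α β * Efun r C t t0 m j i β) - (∑ α,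 ∑ β, Efun r C t t0 m j i α * Hq r Λ t t0 α β * mfun r t0 t k n (t0*(j-1)+i) β) - (∑ α, ∑ β, mfun r t0 t k n (t0*(j-1)+i) α * Hq r Λ t t0 α β * Efun r C t t0 m j i β)))) = _))]
    rw [show (∑ j ∈ Icc 1 k, ((∑ i ∈ Icc 1 t0, ((∑ γ, ∑ γ', ((δ:ℚ) * (t γ:ℚ)/(t0:ℚ)) * Cq r C t γ γ' * mfun r t0 t k m (t0*(j-1)+i) γ * mfun r t0 t k m (t0*(j-1)+i) γ') - 2 * (∑ γ, ((δ:ℚ) * (t γ:ℚ)/(t0:ℚ)) * mfun r t0 t k m (t0*(j-1)+i) γ * mfun r t0 t k n (t0*(j-1)+i) γ) + (∑ γ, ∑ γ', Hq r Λ t t0 γ γ' * mfun r t0 t k n (t0*(j-1)+i) γ * mfun r t0 t k n (t0*(j-1)+i) γ'))) + ∑ i ∈ Icc 1 t0, ( 2*(∑ γ, ((δ:ℚ)*(t γ:ℚ)/(t0:ℚ)) * mfun r t0 t k m (t0*(j-1)+i) γ * Efun r C t t0 m j i γ) + (∑ α, ∑ β, Efun r C t t0 m j i α * Hq r Λ t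 t0 α β * Efun r C t t0 m j i β) - (∑ α, ∑ β, Efun r C t t0 m j i α * Hq r Λ t t0 α β * mfun r t0 t k n (t0*(j-1)+i) β) - (∑ α, ∑ β, mfun r t0 t k n (t0*(j-1)+i) α * Hq r Λ t t0 α β * Efun r C t t0 m j i β))))
        = (∑ j ∈ Icc 1 k, ∑ i ∈ Icc 1 t0, ((∑ γ, ∑ γ', ((δ:ℚ) * (t γ:ℚ)/(t0:ℚ)) * Cq r C t γ γ' * mfun r t0 t k m (t0*(j-1)+i) γ * mfun r t0 t k m (t0*(j-1)+i) γ') - 2 * (∑ γ, ((δ:ℚ) * (t γ:ℚ)/(t0:ℚ)) * mfun r t0 t k m (t0*(j-1)+i) γ * mfun r t0 t k n (t0*(j-1)+i) γ) + (∑ γ, ∑ γ', Hq r Λ t t0 γ γ' * mfun r t0 t k n (t0*(j-1)+i) γ * mfun r t0 t k n (t0*(j-1)+i) γ'))) + ∑ j ∈ Icc 1 k, ∑ i ∈ Icc 1 t0, ( 2*(∑ γ, ((δ:ℚ)*(t γ:ℚ)/(t0:ℚ)) * mfun r t0 t k m (t0*(j-1)+i) γ * Efun r C t t0 m j i γ)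 + (∑ α, ∑ β, Efun r C t t0 m j i α * Hq r Λ t t0 α β * Efun r C t t0 m j i β) - (∑ α, ∑ β, Efun r C t t0 m j i α * Hq r Λ t t0 α β * mfun r t0 t k n (t0*(j-1)+i) β) - (∑ α, ∑ β, mfun r t0 t k n (t0*(j-1)+i) α * Hq r Λ t t0 α β * Efun r C t t0 m j i β))
      from Finset.sum_add_distrib]
    congr 1
    · rw [show (∑ j ∈ Icc 1 k, ∑ i ∈ Icc 1 t0, ((∑ γ, ∑ γ', ((δ:ℚ) * (t γ:ℚ)/(t0:ℚ)) * Cq r C t γ γ' * mfun r t0 t k m (t0*(j-1)+i) γ * mfun r t0 t k m (t0*(j-1)+i) γ') - 2 * (∑ γ, ((δ:ℚ) * (t γ:ℚ)/(t0:ℚ)) * mfun r t0 t k m (t0*(j-1)+i) γ * mfun r t0 t k n (t0*(j-1)+i) γ) + (∑ γ, ∑ γ', Hq r Λ t t0 γ γ' * mfun r t0 t k n (t0*(j-1)+i) γ * mfun r t0 t k n (t0*(j-1)+i) γ')))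
          = ∑ u ∈ Icc 1 (t0*k), ((∑ γ, ∑ γ', ((δ:ℚ) * (t γ:ℚ)/(t0:ℚ)) * Cq r C t γ γ' * mfun r t0 t k m u γ * mfun r t0 t k m u γ') - 2 * (∑ γ, ((δ:ℚ) * (t γ:ℚ)/(t0:ℚ)) * mfun r t0 t k m u γ * mfun r t0 t k n u γ) + (∑ γ, ∑ γ', Hq r Λ t t0 γ γ' * mfun r t0 t k n u γ * mfun r t0 t k n u γ'))
        from (sum_blocks t0 k (fun u => ((∑ γ, ∑ γ', ((δ:ℚ) * (t γ:ℚ)/(t0:ℚ)) * Cq r C t γ γ' * mfun r t0 t k m u γ * mfun r t0 t k m u γ') - 2 * (∑ γ, ((δ:ℚ) * (t γ:ℚ)/(t0:ℚ)) * mfun r t0 t k m u γ * mfun r t0 t k n u γ) + (∑ γ, ∑ γ', Hq r Λ t t0 γ γ' * mfun r t0 t k n u γ * mfun r t0 t k n u γ')))).symm]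
      exact Fterm r C Λ t k t0 δ m n htpos htval ht0
    · refine Finset.sum_congr rfl (fun j hj => ?_)
      simp only [mem_Icc] at hj
      exact Eterm r C Λ t k t0 δ m n htval ht0 hsymΛ j hj.1 hj.2
  have key : (∑ j ∈ Icc 1 k, ((∑ a ∈ univ.filter (fun a => t a = 1), ∑ b ∈ univ.filter (fun b => t b = 1), (qmod r C t k ℓ m n a (j - 1) - qmod r C t k ℓ m n a j) * (Λ a b : ℚ) * (qmod r C t k ℓ m n b (j - 1) - qmod r C t k ℓ m n b j)) + 2 * ∑ a ∈ univ.filter (fun a => t a = 1), ∑ b ∈ univ.filter (fun b => t b = t0), (qmod r C t k ℓ m n a (j - 1) - qmod r C t k ℓ m n a j) * (Λ a b : ℚ) * (qmod r C t k ℓ m n b (t0 * (j - 1)) - qmod r C t k ℓ m n b (t0 * j)))) + (∑ j ∈ Icc 1 (t0 * k), ∑ a ∈ univ.filter (fun a => t a = t0), ∑ b ∈ univ.filter (fun b => t b = t0), (qmod r C t k ℓ m n a (j-1) - qmod r C t k ℓ m n a j) * (Λ a b : ℚ) * (qmod r C t k ℓ m n b (j-1) - qmod r C t k ℓ m n b 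j))
      = 2*(δ:ℚ) * Qk r C t k m n + Lk r t Λ k n + ∑ j ∈ Icc 1 k, Uj r C t t0 Λ m n j := by
    rw [← hsum1, hsum2]
  have hfin : ((∑ j ∈ Icc 1 k, ((∑ a ∈ univ.filter (fun a => t a = 1), ∑ b ∈ univ.filter (fun b => t b = 1), (qmod r C t k ℓ m n a (j - 1) - qmod r C t k ℓ m n a j) * (Λ a b : ℚ) * (qmod r C t k ℓ m n b (j - 1) - qmod r C t k ℓ m n b j)) + 2 * ∑ a ∈ univ.filter (fun a => t a = 1), ∑ b ∈ univ.filter (fun b => t b = t0), (qmod r C t k ℓ m n a (j - 1) - qmod r C t k ℓ m n a j) * (Λ a b : ℚ) * (qmod r C t k ℓ m n b (t0 * (j - 1)) - qmod r C t k ℓ m n b (t0 * j)))) + (∑ j ∈ Icc 1 (t0 * k), ∑ a ∈ univ.filter (fun a => t a = t0), ∑ b ∈ univ.filter (fun b => t b = t0), (qmod r C t k ℓ m n a (j-1) - qmod r C t k ℓ m n a j) * (Λ a b : ℚ) * (qmod r C t k ℓ m n b (j-1) - qmod r C t k ℓ m n b j)) - Lk r t Λ k n - ∑ j ∈ Icc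 1 k, Uj r C t t0 Λ m n j)
      = 2*(δ:ℚ) * Qk r C t k m n := by
    linarith [key]
  rw [hfin]
  field_simp
end

section
/- For all positive integers t_0, j, j' one has min(j, t_0 j') = Σ_{s=0}^{t_0 − 1} min( ⌊(j+s)/t_0⌋ , j' ). -/
/-- Hermite-type identity: `∑_{s<n} ⌊(j+s)/n⌋ = j` when `r = j < n`. -/
lemma hermite_small (n r : ℕ) (hn : 0 < n) (hr : r < n) :
    ∑ s ∈ Finset.range n, (r + s) / n = r := by
  have hcong : ∀ s ∈ Finset.range n, (r + s) / n = if n ≤ r + s then 1 else 0 := by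
    intro s hs
    simp only [Finset.mem_range] at hs
    split_ifs with h
    · exact Nat.div_eq_of_lt_le (by omega) (by omega)
    · exact Nat.div_eq_of_lt (by omega)
  rw [Finset.sum_congr rfl hcong, Finset.sum_boole, Nat.cast_id]
  have : (Finset.range n).filter (fun s => n ≤ r + s) = Finset.Ico (n - r) n := by
    ext s; simp [Finset.mem_range, Finset.mem_Ico]; omega
  rw [this, Nat.card_Ico]; omega

/-- Hermite identity: `∑_{s<n} ⌊(j+s)/n⌋ = j`. -/
lemma hermite (n j : ℕ) (hn : 0 < n) :
    ∑ s ∈ Finset.range n, (j + s) / n = j := by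
  have hdecomp : j = n * (j / n) + j % n := (Nat.div_add_mod j n).symm ▸ by omega
  have hcong : ∀ s ∈ Finset.range n, (j + s) / n = j / n + (j % n + s) / n := by
    intro s hs
    conv_lhs => rw [show j + s = n * (j / n) + (j % n + s) by omega]
    rw [Nat.mul_add_div hn]
  rw [Finset.sum_congr rfl hcong, Finset.sum_add_distrib, Finset.sum_const,
    Finset.card_range, hermite_small n (j % n) hn (Nat.mod_lt _ hn), smul_eq_mul]
  have := Nat.div_add_mod j n
  omega

/-- For all positive integers `t0`, `j`, `j'`,
`min(j, t0·j') = Σ_{s=0}^{t0−1} min(⌊(j+s)/t0⌋, j')`.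
(Natural number division is floor division.) -/
theorem min_eq_sum_min_floor_div (t0 j j' : ℕ) (ht0 : 0 < t0) (hj : 0 < j) (hj' : 0 < j') :
    min j (t0 * j') = ∑ s ∈ Finset.range t0, min ((j + s) / t0) j' := by
  rcases le_or_gt j (t0 * j') with h | h
  · have hcong : ∀ s ∈ Finset.range t0, min ((j + s) / t0) j' = (j + s) / t0 := by
      intro s hs
      simp only [Finset.mem_range] at hs
      refine min_eq_left ?_
      have : (j + s) / t0 < j' + 1 := by
        rw [Nat.div_lt_iff_lt_mul ht0]; nlinarith
      omega
    rw [Finset.sum_congr rfl hcong, hermite t0 j ht0, min_eq_left h]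
  · have hcong : ∀ s ∈ Finset.range t0, min ((j + s) / t0) j' = j' := by
      intro s hs
      refine min_eq_right ?_
      rw [Nat.le_div_iff_mul_le ht0]; nlinarith
    rw [Finset.sum_congr rfl hcong, Finset.sum_const, Finset.card_range, min_eq_right h.le,
      smul_eq_mul]
end

section
/- Let R be an associative unital ring, ν a central invertible element of R, Λ an integer, and let a, b, c be invertible elements of R satisfying the commutation relations a b = ν^{−Λ} b a, b c = ν^{−Λ} c b, and a c = ν^{−2Λ} c a. Suppose Y ∈ R satisfies ν^{−Λ} c a = b² (1 − Y). Then 1 − Y = (b c^{-1})^{-1} (a b^{-1}), and consequently (b c^{-1})(1 − Y) = a b^{-1}; in particular, if 1 − Y is invertible then (a b^{-1})(1 − Y)^{-1} = b c^{-1}. -/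
/-- Abstract form of Lemma 4.6: given invertible `a`, `b`, `c` with the stated
ν-commutation relations and `ν^(−Λ) c a = b²(1 − Y)`, one has
`1 − Y = (b c⁻¹)⁻¹ (a b⁻¹)`, hence `(b c⁻¹)(1 − Y) = a b⁻¹`, and if `1 − Y` is
invertible then `(a b⁻¹)(1 − Y)⁻¹ = b c⁻¹`. -/
theorem one_sub_Y_identity {R : Type*} [Ring R] (ν a b c : Rˣ)
    (hν : ∀ z : R, (ν : R) * z = z * (ν : R)) (Λ : ℤ)
    (hab : a * b = ν ^ (-Λ) * b * a)
    (hbc : b * c = ν ^ (-Λ) * c * b)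
    (hac : a * c = ν ^ (-2 * Λ) * c * a)
    (Y : R)
    (hY : ((ν ^ (-Λ) : Rˣ) : R) * (c : R) * (a : R) = (b : R) ^ 2 * (1 - Y)) :
    (1 - Y = (((b * c⁻¹)⁻¹ : Rˣ) : R) * ((a * b⁻¹ : Rˣ) : R))
      ∧ ((b * c⁻¹ : Rˣ) : R) * (1 - Y) = ((a * b⁻¹ : Rˣ) : R)
      ∧ ∀ w : Rˣ, (w : R) = 1 - Y →
          ((a * b⁻¹ : Rˣ) : R) * ((w⁻¹ : Rˣ) : R) = ((b * c⁻¹ : Rˣ) : R) := by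
  set n : Rˣ := ν ^ (-Λ) with hn_def
  -- n is central
  have hcn : ∀ z : R, Commute ((n : R)) z := fun z =>
    Commute.units_zpow_left (hν z) (-Λ)
  have hcninv : ∀ z : R, Commute ((↑n⁻¹ : R)) z := fun z =>
    (hcn z).units_inv_left
  -- commutation in R
  have hbcR : (b : R) * c = (n : R) * c * b := by
    have := congrArg (Units.val) hbc; simpa [hn_def] using this
  have habR : (a : R) * b = (n : R) * b * a := by
    have := congrArg (Units.val) hab; simpa [hn_def] using this
  -- c * b⁻¹ = n * (b⁻¹ * c)
  have hcb : (c : R) * ↑b⁻¹ = (n : R) * (↑b⁻¹ * c) := by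
    have h1 : (↑b⁻¹ : R) * ((b : R) * c) * ↑b⁻¹ = (c : R) * ↑b⁻¹ := by simp
    have h2 : (↑b⁻¹ : R) * ((n : R) * c * b) * ↑b⁻¹ = (n : R) * (↑b⁻¹ * c) := by
      simp only [mul_assoc]
      rw [(hcn (↑b⁻¹ : R)).symm.left_comm]
      simp [mul_assoc]
    rw [← h1, hbcR, h2]
  -- b⁻¹ * a = n * (a * b⁻¹)
  have hba : (↑b⁻¹ : R) * a = (n : R) * ((a : R) * ↑b⁻¹) := by
    have h1 : (↑b⁻¹ : R) * ((a : R) * b) * ↑b⁻¹ = (↑b⁻¹ : R) * a := by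
      simp [mul_assoc]
    have h2 : (↑b⁻¹ : R) * ((n : R) * b * a) * ↑b⁻¹ = (n : R) * ((a : R) * ↑b⁻¹) := by
      simp only [mul_assoc]
      rw [(hcn (↑b⁻¹ : R)).symm.left_comm]
      simp [mul_assoc]
    rw [← h1, habR, h2]
  have hab' : (a : R) * ↑b⁻¹ = (↑n⁻¹ : R) * (↑b⁻¹ * a) := by
    rw [hba, ← mul_assoc]
    simp
  -- parametrized centrality
  have hmidn : ∀ x y : R, x * ((n : R) * y) = (n : R) * (x * y) := fun x y =>
    ((hcn x).symm.left_comm y)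
  have hmidn' : ∀ x y : R, x * ((↑n⁻¹ : R) * y) = (↑n⁻¹ : R) * (x * y) := fun x y =>
    ((hcninv x).symm.left_comm y)
  have hcb2 : ∀ z : R, (c : R) * (↑b⁻¹ * z) = (n : R) * (↑b⁻¹ * ((c : R) * z)) := by
    intro z
    rw [← mul_assoc, hcb, mul_assoc, mul_assoc]
  -- 1 - Y from hY
  have h1Y : 1 - Y = (↑b⁻¹ : R) * ↑b⁻¹ * ((n : R) * c * a) := by
    rw [hY, pow_two]
    simp [mul_assoc]
  -- main computation
  have key : 1 - Y = (((b * c⁻¹)⁻¹ : Rˣ) : R) * ((a * b⁻¹ : Rˣ) : R) := by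
    have hco : (((b * c⁻¹)⁻¹ : Rˣ) : R) * ((a * b⁻¹ : Rˣ) : R)
        = (c : R) * ↑b⁻¹ * ((a : R) * ↑b⁻¹) := by
      simp [mul_inv_rev, Units.val_mul, mul_assoc]
    rw [hco, hab', h1Y]
    simp only [mul_assoc, hmidn', Units.inv_mul_cancel_left,
      Units.mul_inv_cancel_left]
    simp only [hcb2, hmidn, mul_assoc, Units.mul_inv_cancel_left]
  refine ⟨key, ?_, ?_⟩
  · rw [key, ← mul_assoc, ← Units.val_mul, mul_inv_cancel]
    simp
  · intro w hw
    have h2 : ((b * c⁻¹ : Rˣ) : R) * (w : R) = ((a * b⁻¹ : Rˣ) : R) := by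
      rw [hw, key, ← mul_assoc, ← Units.val_mul, mul_inv_cancel]; simp
    have h3 : b * c⁻¹ * w = a * b⁻¹ := Units.ext (by simpa using h2)
    have h4 : a * b⁻¹ * w⁻¹ = b * c⁻¹ := by
      rw [← h3, mul_assoc, mul_inv_cancel, mul_one]
    rw [← Units.val_mul, h4]
end

section
/- Let R be an associative unital ring, ν a central invertible element of R, Λ an integer, and let x, y be invertible elements of R satisfying x y = ν^{−Λ} y x. Set Z = x y^{-1}. Then for every integer b, Z^{b+1} x^{−b} = ν^{b(b+1)Λ/2} · Z · y^{−b}. -/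
/-! Both sides, as functions of `b`, satisfy the recursion `u ↦ Z u x⁻¹` and equal `Z` at
`b = 0`; since this map is injective they agree for all integers `b`. For the right-hand side
the recursion comes from `x y⁻ᵐ x⁻¹ = ν^(mΛ) y⁻ᵐ` and `(b+1)(b+2)/2 = b(b+1)/2 + (b+1)`. -/

theorem Function.Injective.eq_of_int_succ {α : Type*} {φ : α → α} (hφ : Function.Injective φ)
    {f g : ℤ → α} (hf : ∀ b, f (b + 1) = φ (f b)) (hg : ∀ b, g (b + 1) = φ (g b))
    (h0 : f 0 = g 0) : f = g := by
  funext b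
  induction b using Int.induction_on with
  | zero => exact h0
  | succ n ih => rw [hf, hg, ih]
  | pred n ih => exact hφ (by rw [← hf, ← hg, sub_add_cancel, ih])

theorem conj_zpow_eq_of_mul_eq {G : Type*} [Group G] {c x y : G} (hc : Commute c y) {k : ℤ}
    (h : x * y = c ^ k * y * x) (n : ℤ) : x * y ^ n * x⁻¹ = c ^ (k * n) * y ^ n := by
  have hconj : x * y * x⁻¹ = c ^ k * y := by rw [h, mul_inv_cancel_right]
  rw [← conj_zpow, hconj, (hc.zpow_left k).mul_zpow, zpow_mul]

theorem Int.succ_mul_succ_add_one_ediv_two (b : ℤ) :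
    (b + 1) * (b + 1 + 1) / 2 = b * (b + 1) / 2 + (b + 1) := by
  rw [← Int.add_mul_ediv_right _ _ two_ne_zero]
  ring_nf

/-- Abstract form of Corollary 4.8: if `x y = ν^(−Λ) y x` with `ν` central invertible,
and `Z = x y⁻¹`, then `Z^(b+1) x^(−b) = ν^(b(b+1)Λ/2) · Z · y^(−b)` for every integer `b`. -/
theorem zhat_pow_identity {R : Type*} [Ring R] (ν x y : Rˣ)
    (hν : ∀ z : R, (ν : R) * z = z * (ν : R)) (Λ : ℤ)
    (hxy : x * y = ν ^ (-Λ) * y * x) (b : ℤ) :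
    (x * y⁻¹) ^ (b + 1) * x ^ (-b) = ν ^ (b * (b + 1) / 2 * Λ) * (x * y⁻¹) * y ^ (-b) := by
  set Z := x * y⁻¹
  have hcentral : ∀ g : Rˣ, Commute ν g := fun g => Units.ext (hν g)
  have hconj : ∀ n : ℤ, x * y ^ n * x⁻¹ = ν ^ (-Λ * n) * y ^ n :=
    conj_zpow_eq_of_mul_eq (hcentral y) hxy
  suffices (fun b => Z ^ (b + 1) * x ^ (-b)) = fun b => ν ^ (b * (b + 1) / 2 * Λ) * Z * y ^ (-b)
    from congrFun this b
  refine Function.Injective.eq_of_int_succ (φ := fun u => Z * u * x⁻¹)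
    (fun u v huv => by simpa using huv) (fun n => by group) (fun n => ?_) (by simp)
  show _ = Z * _ * x⁻¹
  have hcentral_pow (k : ℤ) : Commute (ν ^ k) Z := (hcentral Z).zpow_left k
  calc ν ^ ((n + 1) * (n + 1 + 1) / 2 * Λ) * Z * y ^ (-(n + 1))
      = ν ^ (n * (n + 1) / 2 * Λ) * (ν ^ (-Λ * -(n + 1)) * (Z * y ^ (-(n + 1)))) := by
        rw [Int.succ_mul_succ_add_one_ediv_two, neg_mul_neg, mul_comm Λ, add_mul, zpow_add]
        simp only [mul_assoc]
    _ = ν ^ (n * (n + 1) / 2 * Λ) * (Z * (x * y ^ (-(n + 1)) * x⁻¹)) := by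
        rw [(hcentral_pow _).left_comm, hconj]
    _ = ν ^ (n * (n + 1) / 2 * Λ) * (Z * (Z * y ^ (-n)) * x⁻¹) := by
        simp only [Z]
        group
    _ = Z * (ν ^ (n * (n + 1) / 2 * Λ) * Z * y ^ (-n)) * x⁻¹ := by
        simp only [mul_assoc]
        exact (hcentral_pow _).left_comm _
end
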